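/- arXiv:2201.02687 — 12 statements merged into one kernel-verified Lean document; each statement's English description precedes it below -/
import Mathlib

section
/- Let n ≥ 1 and c > 1 be a real number. Define ψ(μ) = μ^{n+2} + (c−1)μ − c. Then the polynomial c + μ + μ² + ⋯ + μ^{n+1} has no repeated complex roots, i.e., there is no μ₀ ∈ ℂ with ψ(μ₀) = 0, ψ'(μ₀) = 0 and μ₀ ≠ 1. -/
/-!
At a double root `μ` of `ψ(μ) = μ^{m+1} + aμ - b` the equations `ψ(μ) = 0` and `μ ψ'(μ) = 0`
are linear in `μ^{m+1}`; eliminating it gives `a m μ = (m + 1) b`. For `ψ(μ) = μ^{n+2} + (c-1)μ - c`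
with `c > 1` this forces `μ` to be a positive real number, where `ψ'(μ) = (n+2)μ^{n+1} + c - 1 > 0`.
-/

theorem hasDerivAt_pow_add_mul_sub_const {𝕜 : Type*} [NontriviallyNormedField 𝕜] (m : ℕ)
    (a b x : 𝕜) :
    HasDerivAt (fun μ => μ ^ m + a * μ - b) (m * x ^ (m - 1) + a) x := by
  simpa using ((hasDerivAt_pow m x).add ((hasDerivAt_id x).const_mul a)).sub_const b

theorem mul_eq_of_isDoubleRoot_pow_add_mul_sub {R : Type*} [CommRing R] (m : ℕ) {a b x : R}
    (hψ : x ^ (m + 1) + a * x - b = 0) (hψ' : (m + 1) * x ^ m + a = 0) :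
    a * m * x = (m + 1) * b := by
  linear_combination (m + 1) * hψ - x * hψ'

theorem stmt0_general (n : ℕ) (c : ℝ) (hc : 1 < c) :
    ¬ ∃ μ₀ : ℂ, μ₀ ^ (n + 2) + ((c : ℂ) - 1) * μ₀ - (c : ℂ) = 0 ∧
      deriv (fun μ : ℂ => μ ^ (n + 2) + ((c : ℂ) - 1) * μ - (c : ℂ)) μ₀ = 0 ∧ μ₀ ≠ 1 := by
  rintro ⟨μ, hψ, hd, -⟩
  rw [(hasDerivAt_pow_add_mul_sub_const _ _ _ μ).deriv, show n + 2 - 1 = n + 1 from rfl] at hd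
  have hψ' : ((n + 1 : ℕ) + 1 : ℂ) * μ ^ (n + 1) + (c - 1) = 0 := by
    rw [← hd]; push_cast; ring
  have hlin := mul_eq_of_isDoubleRoot_pow_add_mul_sub (n + 1) hψ hψ'
  have hc₁ : 0 < c - 1 := by linarith
  obtain ⟨r, hr, rfl⟩ : ∃ r : ℝ, 0 < r ∧ μ = r := by
    refine ⟨(n + 2) * c / ((c - 1) * (n + 1)), by positivity, ?_⟩
    have : ((c : ℂ) - 1) * (n + 1) ≠ 0 := by exact_mod_cast (by positivity : (c - 1) * (n + 1) ≠ 0)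
    push_cast at hlin ⊢
    rw [eq_div_iff this]
    linear_combination hlin
  have hd : (n + 2 : ℕ) * r ^ (n + 1) + (c - 1) = 0 := by exact_mod_cast hd
  have hpos : 0 < (n + 2 : ℕ) * r ^ (n + 1) + (c - 1) := by positivity
  exact hpos.ne' hd

/-- The polynomial `c + μ + μ² + ⋯ + μ^{n+1}` (with real `c > 1`, `n ≥ 1`) has no
repeated complex roots: there is no `μ₀ ∈ ℂ` with `ψ(μ₀) = 0`, `ψ'(μ₀) = 0` and `μ₀ ≠ 1`,
where `ψ(μ) = μ^{n+2} + (c−1)μ − c`. -/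
theorem stmt0 (n : ℕ) (hn : 1 ≤ n) (c : ℝ) (hc : 1 < c) :
    ¬ ∃ μ₀ : ℂ, μ₀ ^ (n + 2) + ((c : ℂ) - 1) * μ₀ - (c : ℂ) = 0 ∧
      deriv (fun μ : ℂ => μ ^ (n + 2) + ((c : ℂ) - 1) * μ - (c : ℂ)) μ₀ = 0 ∧ μ₀ ≠ 1 :=
  stmt0_general n c hc
end

section
/- Let n ≥ 1 and c > 1. If μ ∈ ℂ satisfies c + μ + μ² + ⋯ + μ^{n+1} = 0, then |μ| > 1. -/
/-!
Multiplying the equation by `μ - 1` turns it into `μ ^ (n + 2) = 1 + (c - 1) * (1 - μ)`.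
If `‖μ‖ ≤ 1` and `μ ≠ 1`, then `1 - μ` is a nonzero number in the closed right half-plane, so
`1 + (c - 1) * (1 - μ)` has norm `> 1 ≥ ‖μ‖ ^ (n + 2)`; and `μ = 1` is not a root since `c > 0`.
-/

open Finset

theorem pow_succ_eq_of_add_sum_pow_succ_eq_zero {R : Type*} [CommRing R] {x c : R} {m : ℕ}
    (h : c + ∑ l ∈ range m, x ^ (l + 1) = 0) : x ^ (m + 1) = 1 + (c - 1) * (1 - x) := by
  have hsum : ∑ l ∈ range m, x ^ (l + 1) = x * ∑ l ∈ range m, x ^ l := by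
    simp only [mul_sum, pow_succ']
  linear_combination (x - 1) * h - x * geom_sum_mul x m - (x - 1) * hsum

theorem Complex.one_lt_norm_one_add_ofReal_mul {t : ℝ} {w : ℂ} (ht : 0 < t) (hw : w ≠ 0)
    (hre : 0 ≤ w.re) : 1 < ‖1 + t * w‖ := by
  have hnormSq : 0 < w.re ^ 2 + w.im ^ 2 := by
    simpa [Complex.normSq_apply, sq] using Complex.normSq_pos.2 hw
  rw [← one_lt_sq_iff₀ (norm_nonneg _), Complex.sq_norm, Complex.normSq_apply]
  simp only [add_re, add_im, one_re, one_im, re_ofReal_mul, im_ofReal_mul]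
  nlinarith [mul_nonneg ht.le hre, mul_pos (mul_pos ht ht) hnormSq]

theorem stmt1_general (n : ℕ) (c : ℝ) (hc : 1 < c) (μ : ℂ)
    (hroot : (c : ℂ) + ∑ l ∈ Finset.range (n + 1), μ ^ (l + 1) = 0) :
    1 < ‖μ‖ := by
  by_contra! hμ
  have hμ1 : μ ≠ 1 := by
    rintro rfl
    have hre := congrArg Complex.re hroot
    simp only [one_pow, sum_const, card_range, nsmul_eq_mul, mul_one, Complex.add_re,
      Complex.ofReal_re, Complex.natCast_re, Complex.zero_re] at hre
    linarith [n.cast_nonneg (α := ℝ)]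
  have hlt := Complex.one_lt_norm_one_add_ofReal_mul (t := c - 1) (w := 1 - μ) (by linarith)
    (sub_ne_zero.2 hμ1.symm) (by simpa using (Complex.re_le_norm μ).trans hμ)
  push_cast at hlt
  rw [← pow_succ_eq_of_add_sum_pow_succ_eq_zero hroot, norm_pow] at hlt
  exact hlt.not_ge (pow_le_one₀ (norm_nonneg μ) hμ)

/-- If `c > 1`, `n ≥ 1` and `μ ∈ ℂ` satisfies `c + μ + ⋯ + μ^{n+1} = 0`, then `|μ| > 1`. -/
theorem stmt1 (n : ℕ) (hn : 1 ≤ n) (c : ℝ) (hc : 1 < c) (μ : ℂ)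
    (hroot : (c : ℂ) + ∑ l ∈ Finset.range (n + 1), μ ^ (l + 1) = 0) :
    1 < ‖μ‖ :=
  stmt1_general n c hc μ hroot
end

section
/- Let n ≥ 1 and c > 1. If μ ∈ ℂ satisfies c + μ + μ² + ⋯ + μ^{n+1} = 0, then |μ|^{n+1} < 2c − 1. -/
/-!
Multiplying the equation by `μ - 1` collapses the geometric sum: `μ^(n+2) = c - (c - 1) μ`.
Taking real parts, `‖c - (c - 1) μ‖ > 1` whenever `‖μ‖ ≤ 1` and `μ ≠ 1`, which forces `‖μ‖ > 1`;
the triangle inequality then gives `‖μ‖^(n+2) ≤ c + (c - 1) ‖μ‖ < (2c - 1) ‖μ‖`.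
-/

open Finset

theorem pow_succ_eq_of_add_geom_sum_eq_zero {R : Type*} [CommRing R] {c μ : R} {m : ℕ}
    (h : c + ∑ l ∈ range m, μ ^ (l + 1) = 0) : μ ^ (m + 1) = c - (c - 1) * μ := by
  have hsum : ∑ l ∈ range m, μ ^ (l + 1) = μ * ∑ l ∈ range m, μ ^ l := by
    rw [mul_sum]
    exact sum_congr rfl fun l _ => pow_succ' μ l
  linear_combination (μ - 1) * h - (μ - 1) * hsum - μ * geom_sum_mul μ m

namespace Complex

theorem re_lt_one_of_norm_le_one {z : ℂ} (hz : ‖z‖ ≤ 1) (hne : z ≠ 1) : z.re < 1 := by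
  by_contra! hre
  have hsq : z.re * z.re + z.im * z.im ≤ 1 := by
    rw [← normSq_apply, ← Complex.sq_norm]
    exact pow_le_one₀ (norm_nonneg z) hz
  have him : z.im = 0 := by nlinarith
  exact hne (ext (by rw [one_re]; nlinarith) him)

theorem one_lt_norm_of_pow_eq {c : ℝ} (hc : 1 < c) {μ : ℂ} {k : ℕ} (hμ : μ ≠ 1)
    (h : μ ^ k = c - (c - 1) * μ) : 1 < ‖μ‖ := by
  by_contra! hle
  have hre : ((c : ℂ) - (c - 1) * μ).re = 1 + (c - 1) * (1 - μ.re) := by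
    simp only [sub_re, ofReal_re, mul_re, one_re, ofReal_im, one_im, sub_im]
    ring
  have : 1 < ‖μ ^ k‖ := by
    rw [h]
    calc (1 : ℝ) < 1 + (c - 1) * (1 - μ.re) := by
          have := re_lt_one_of_norm_le_one hle hμ
          nlinarith
      _ = ((c : ℂ) - (c - 1) * μ).re := hre.symm
      _ ≤ _ := re_le_norm _
  rw [norm_pow] at this
  exact this.not_ge (pow_le_one₀ (norm_nonneg μ) hle)

theorem norm_pow_le_of_pow_eq {c : ℝ} (hc : 1 ≤ c) {μ : ℂ} {k : ℕ}
    (h : μ ^ k = c - (c - 1) * μ) : ‖μ‖ ^ k ≤ c + (c - 1) * ‖μ‖ := by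
  have hc' : ((c : ℂ) - 1) = ((c - 1 : ℝ) : ℂ) := by push_cast; ring
  calc ‖μ‖ ^ k = ‖(c : ℂ) - (c - 1) * μ‖ := by rw [← norm_pow, h]
    _ ≤ ‖(c : ℂ)‖ + ‖((c : ℂ) - 1) * μ‖ := norm_sub_le _ _
    _ = c + (c - 1) * ‖μ‖ := by
      rw [norm_mul, hc', norm_real, norm_real, Real.norm_of_nonneg (by linarith),
        Real.norm_of_nonneg (by linarith)]

end Complex

theorem stmt2_general (n : ℕ) (c : ℝ) (hc : 1 < c) (μ : ℂ)
    (hroot : (c : ℂ) + ∑ l ∈ Finset.range (n + 1), μ ^ (l + 1) = 0) :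
    ‖μ‖ ^ (n + 1) < 2 * c - 1 := by
  have hpow := pow_succ_eq_of_add_geom_sum_eq_zero hroot
  have hμ : μ ≠ 1 := by
    rintro rfl
    have hre := congrArg Complex.re hroot
    simp only [one_pow, sum_const, card_range, nsmul_eq_mul, mul_one, Complex.add_re,
      Complex.ofReal_re, Complex.natCast_re, Complex.zero_re] at hre
    linarith
  have hr := Complex.one_lt_norm_of_pow_eq hc hμ hpow
  have hbound := Complex.norm_pow_le_of_pow_eq hc.le hpow
  rw [pow_succ'] at hbound
  -- `c + (c - 1) r < c r + (c - 1) r`; divide by `r > 0`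
  nlinarith

/-- If `c > 1`, `n ≥ 1` and `μ ∈ ℂ` satisfies `c + μ + ⋯ + μ^{n+1} = 0`,
then `|μ|^{n+1} < 2c − 1`. -/
theorem stmt2 (n : ℕ) (hn : 1 ≤ n) (c : ℝ) (hc : 1 < c) (μ : ℂ)
    (hroot : (c : ℂ) + ∑ l ∈ Finset.range (n + 1), μ ^ (l + 1) = 0) :
    ‖μ‖ ^ (n + 1) < 2 * c - 1 :=
  stmt2_general n c hc μ hroot
end

section
/- Let c > 1, n > 11, and let μ ∈ ℂ with |μ| > 1 satisfy μ^{n+1} = c/μ − (c−1) (equivalently, c + μ + ⋯ + μ^{n+1} = 0). Then |n + 2 + (c−1)μ^{−n−1}| > n/2. -/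
/-!
With `w = μ ^ (n + 2) = c - (c - 1) μ` the quantity equals `n + 1 + c / w`. If its modulus were at
most `n / 2`, then `c / w`, hence `w`, would lie in the sector `Re + |Im| < 0`, and
`|w| ≤ 2c / (n + 2)`. The first fact forces `(c - 1) Re μ ≥ c`, and with the second it gives
`|Im μ| ≤ 2 Re μ / (n + 2)`, so `|arg μ| ≤ 2 / (n + 2)`. But then `w = |μ|^(n+2) e^{iφ}` with
`|φ| ≤ 2 < 3π/4`, which lies outside that sector.
-/

open Real

namespace Real

lemma cos_add_sin_pos {x : ℝ} (h0 : 0 ≤ x) (h2 : x ≤ 2) : 0 < cos x + sin x := by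
  have hcos : cos x + sin x = √2 * cos (x - π / 4) := by
    rw [cos_sub, cos_pi_div_four, sin_pi_div_four]
    linear_combination (-(cos x + sin x) / 2) * mul_self_sqrt (zero_le_two : (0 : ℝ) ≤ 2)
  rw [hcos]
  refine mul_pos (by positivity) (cos_pos_of_mem_Ioo ⟨?_, ?_⟩) <;> linarith [pi_gt_three]

lemma cos_add_abs_sin_pos {x : ℝ} (h : |x| ≤ 2) : 0 < cos x + |sin x| := by
  have hsin : sin |x| ≤ |sin x| := by
    rcases abs_choice x with hx | hx <;> rw [hx]
    · exact le_abs_self _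
    · rw [sin_neg]; exact neg_le_abs _
  calc 0 < cos |x| + sin |x| := cos_add_sin_pos (abs_nonneg x) h
    _ ≤ cos x + |sin x| := by rw [cos_abs]; linarith

lemma abs_le_abs_tan {x : ℝ} (h : |x| < π / 2) : |x| ≤ |tan x| := by
  have := le_tan (abs_nonneg x) h
  rcases abs_choice x with hx | hx <;> rw [hx] at this ⊢
  · exact this.trans (le_abs_self _)
  · rw [tan_neg] at this; exact this.trans (neg_le_abs _)

end Real

namespace Complex

lemma abs_arg_le_abs_im_div_re {z : ℂ} (h : 0 < z.re) : |arg z| ≤ |z.im| / z.re := by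
  have := Real.abs_le_abs_tan (abs_arg_lt_pi_div_two_iff.2 (Or.inl h))
  rwa [tan_arg, abs_div, abs_of_pos h] at this

lemma mul_abs_arg_le {z : ℂ} {k a : ℝ} (hk : 0 ≤ k) (hre : 0 < z.re)
    (h : k * |z.im| ≤ a * z.re) : k * |arg z| ≤ a :=
  calc k * |arg z| ≤ k * (|z.im| / z.re) := by gcongr; exact abs_arg_le_abs_im_div_re hre
    _ ≤ a := by rw [← mul_div_assoc, div_le_iff₀ hre]; exact h

lemma re_add_abs_im_pow_pos {z : ℂ} (hz : z ≠ 0) {k : ℕ} (h : k * |arg z| ≤ 2) :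
    0 < (z ^ k).re + |(z ^ k).im| := by
  have hpolar : z ^ k = ((‖z‖ ^ k : ℝ) : ℂ) * exp ((k * arg z : ℝ) * I) := by
    conv_lhs => rw [← norm_mul_exp_arg_mul_I z]
    rw [mul_pow, ← exp_nat_mul]
    push_cast
    ring_nf
  have hr : 0 < ‖z‖ ^ k := pow_pos (norm_pos_iff.2 hz) k
  rw [hpolar, re_ofReal_mul, im_ofReal_mul, exp_ofReal_mul_I_re, exp_ofReal_mul_I_im, abs_mul,
    abs_of_pos hr, ← mul_add]
  refine mul_pos hr (Real.cos_add_abs_sin_pos ?_)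
  rwa [abs_mul, Nat.abs_cast]

lemma re_add_abs_im_le_of_norm_add_le {a r : ℝ} {z : ℂ} (h : ‖(a : ℂ) + z‖ ≤ r) :
    z.re + |z.im| ≤ 2 * r - a := by
  have hre := (abs_le.1 ((abs_re_le_norm _).trans h)).2
  have him := (abs_im_le_norm _).trans h
  simp only [add_re, add_im, ofReal_re, ofReal_im, zero_add] at hre him
  linarith

lemma re_add_abs_im_ofReal_div {c : ℝ} (hc : 0 ≤ c) (z : ℂ) :
    ((c : ℂ) / z).re + |((c : ℂ) / z).im| = c * (z.re + |z.im|) / normSq z := by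
  simp only [div_re, div_im, ofReal_re, ofReal_im, zero_mul, add_zero, zero_div, zero_sub]
  rw [abs_neg, abs_div, abs_mul, abs_of_nonneg hc, abs_of_nonneg (normSq_nonneg z)]
  ring

lemma re_add_abs_im_neg_of_norm_add_div_le {a r c : ℝ} (hc : 0 < c) (hra : 2 * r < a) {w : ℂ}
    (h : ‖(a : ℂ) + c / w‖ ≤ r) : w.re + |w.im| < 0 := by
  have hdiv := re_add_abs_im_le_of_norm_add_le h
  rw [re_add_abs_im_ofReal_div hc.le] at hdiv
  by_contra! hw
  have := div_nonneg (mul_nonneg hc.le hw) (normSq_nonneg w)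
  exact (this.trans hdiv).not_gt (sub_neg.2 hra)

lemma mul_norm_le_of_norm_add_div_le {a r c : ℝ} (hc : 0 < c) {w : ℂ}
    (h : ‖(a : ℂ) + c / w‖ ≤ r) : (a - r) * ‖w‖ ≤ c := by
  rcases eq_or_ne w 0 with rfl | hw
  · simpa using hc.le
  have hdiv : a - r ≤ c / ‖w‖ := by
    have := norm_sub_le ((a : ℂ) + c / w) (c / w)
    rw [add_sub_cancel_right, norm_div, norm_real, norm_real, Real.norm_eq_abs,
      norm_of_nonneg hc.le] at this
    linarith [le_abs_self a]
  rwa [le_div_iff₀ (norm_pos_iff.2 hw)] at hdiv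

end Complex

open Complex

lemma re_pos_and_mul_abs_im_le {c k : ℝ} (hc : 1 < c) (hk : 0 ≤ k) {μ w : ℂ}
    (hw : w = c - (c - 1) * μ) (hre : w.re ≤ 0) (hnorm : k * ‖w‖ ≤ c) :
    0 < μ.re ∧ k * |μ.im| ≤ μ.re := by
  have hwre : w.re = c - (c - 1) * μ.re := by simp [hw]
  have hwim : |w.im| = (c - 1) * |μ.im| := by
    simp [hw, abs_mul, abs_of_pos (sub_pos.2 hc)]
  have hμre : c ≤ (c - 1) * μ.re := by linarith
  have hpos : 0 < μ.re := by nlinarith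
  refine ⟨hpos, ?_⟩
  have him : (c - 1) * |μ.im| ≤ ‖w‖ := hwim ▸ abs_im_le_norm w
  have : (c - 1) * (k * |μ.im|) ≤ (c - 1) * μ.re := by
    nlinarith [mul_le_mul_of_nonneg_left him hk]
  exact le_of_mul_le_mul_left this (by linarith)

theorem stmt4_general (n : ℕ) (c : ℝ) (hc : 1 < c) (μ : ℂ)
    (heq : μ ^ (n + 1) = (c : ℂ) / μ - ((c : ℂ) - 1)) :
    (n : ℝ) / 2 < ‖(n : ℂ) + 2 + ((c : ℂ) - 1) * (μ ^ (n + 1))⁻¹‖ := by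
  have hc0 : 0 < c := by linarith
  have hμ : μ ≠ 0 := by
    rintro rfl
    have : ((1 - c : ℝ) : ℂ) = 0 := by simpa using heq.symm
    linarith [ofReal_eq_zero.1 this]
  set w := μ ^ (n + 2) with hwdef
  have hw : w = c - (c - 1) * μ := by
    rw [hwdef, pow_succ, heq]
    field_simp
  have htarget : (n : ℂ) + 2 + ((c : ℂ) - 1) * (μ ^ (n + 1))⁻¹ = ((n + 1 : ℝ) : ℂ) + c / w := by
    rw [hwdef, pow_succ]
    push_cast
    field_simp
    linear_combination (μ ^ (n + 1)) * hw
  rw [htarget]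
  by_contra! hle
  have hsector := re_add_abs_im_neg_of_norm_add_div_le hc0 (by linarith) hle
  have hnorm : ((n + 2) / 2 : ℝ) * ‖w‖ ≤ c := by
    convert mul_norm_le_of_norm_add_div_le hc0 hle using 2
    ring
  obtain ⟨hre, him⟩ := re_pos_and_mul_abs_im_le hc (by positivity) hw
    (by linarith [abs_nonneg w.im]) hnorm
  have harg := mul_abs_arg_le (by positivity) hre (him.trans_eq (one_mul _).symm)
  linarith [re_add_abs_im_pow_pos hμ (k := n + 2) (by push_cast; linarith)]

/-- Let `c > 1`, `n > 11`, and `μ ∈ ℂ` with `|μ| > 1` satisfy `μ^{n+1} = c/μ − (c−1)`.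
Then `|n + 2 + (c−1)μ^{−n−1}| > n/2`. -/
theorem stmt4 (n : ℕ) (hn : 11 < n) (c : ℝ) (hc : 1 < c) (μ : ℂ)
    (hμ : 1 < ‖μ‖)
    (heq : μ ^ (n + 1) = (c : ℂ) / μ - ((c : ℂ) - 1)) :
    (n : ℝ) / 2 < ‖(n : ℂ) + 2 + ((c : ℂ) - 1) * (μ ^ (n + 1))⁻¹‖ :=
  stmt4_general n c hc μ heq
end

section
/- Let μ₁, …, μ_{n+1} be the distinct complex roots of c + μ + ⋯ + μ^{n+1} = 0 with c > 1, and let L_j(μ) = ∏_{k≠j} (μ − μ_k)/(μ_j − μ_k) be the j-th Lagrange interpolation polynomial at these nodes, with coefficients L_{jk} so that L_j(μ) = ∑_{k=1}^{n+1} L_{jk} μ^{k−1}. Then L_{jk} = (μ_j^{n+2−k} − 1)/((n+2)μ_j^{n+1} + c − 1) for all 1 ≤ j, k ≤ n+1. -/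
/-!
The nodes are exactly the roots of the monic polynomial `P = c + X + ⋯ + X^(n+1)`, so the nodal
polynomial is `P` and `L_j = (P / (X - μ_j)) / P'(μ_j)`. Synthetic division of `P` by `X - μ_j`
has geometric sums of powers of `μ_j` as coefficients, and `(μ_j - 1)` times the `k`-th one is
`μ_j^(n+1-k) - 1`. Differentiating `(X - 1)(P - c) = X^(n+2) - X` at the root `μ_j` gives
`(μ_j - 1) P'(μ_j) = (n+2) μ_j^(n+1) + c - 1`. Since `c > 1`, `μ_j ≠ 1`, and the factor
`μ_j - 1` cancels in the quotient.
-/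

open Polynomial Finset

namespace Lagrange

theorem nodal_eq_of_monic_of_eval_eq_zero {R ι : Type*} [CommRing R] [IsDomain R]
    {s : Finset ι} {v : ι → R} {p : R[X]} (hvs : Set.InjOn v s) (hp : p.Monic)
    (hdeg : p.natDegree = #s) (hroots : ∀ i ∈ s, p.eval (v i) = 0) : nodal s v = p :=
  eq_of_degree_le_of_eval_index_eq s hvs (by rw [degree_nodal])
    (by rw [degree_nodal, degree_eq_natDegree hp.ne_zero, hdeg])
    (by rw [nodal_monic.leadingCoeff, hp.leadingCoeff])
    (fun i hi => by rw [eval_nodal_at_node hi, hroots i hi])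

theorem coeff_basis {F ι : Type*} [Field F] [DecidableEq ι] {s : Finset ι} {v : ι → F} {i : ι}
    (hi : i ∈ s) (k : ℕ) :
    (Lagrange.basis s v i).coeff k =
      (nodal s v /ₘ (X - C (v i))).coeff k / (derivative (nodal s v)).eval (v i) := by
  rw [basis_eq_prod_sub_inv_mul_nodal_div hi, nodalWeight_eq_eval_derivative_nodal hi,
    coeff_C_mul, ← divByMonic_eq_div _ (monic_X_sub_C _), div_eq_inv_mul]

end Lagrange

section GeomSumAddC

variable {R : Type*} [CommRing R]

noncomputable def geomSumAddC (c : R) (n : ℕ) : R[X] :=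
  C c + ∑ l ∈ range (n + 1), X ^ (l + 1)

theorem coeff_geomSumAddC_succ (c : R) (n m : ℕ) :
    (geomSumAddC c n).coeff (m + 1) = if m ≤ n then 1 else 0 := by
  simp [geomSumAddC, coeff_X_pow]

theorem eval_geomSumAddC (c x : R) (n : ℕ) :
    (geomSumAddC c n).eval x = c + ∑ l ∈ range (n + 1), x ^ (l + 1) := by
  simp [geomSumAddC, eval_finsetSum]

theorem X_sub_one_mul_geomSumAddC_sub_C (c : R) (n : ℕ) :
    (X - 1) * (geomSumAddC c n - C c) = X ^ (n + 2) - X := by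
  have hgeom : geomSumAddC c n - C c = X * ∑ l ∈ range (n + 1), X ^ l := by
    simp only [geomSumAddC, add_sub_cancel_left, mul_sum, pow_succ']
  rw [hgeom, mul_left_comm, mul_comm _ (∑ l ∈ range (n + 1), X ^ l), geom_sum_mul]
  ring

theorem sub_one_mul_eval_derivative_geomSumAddC {c x : R} {n : ℕ}
    (hx : (geomSumAddC c n).eval x = 0) :
    (x - 1) * (derivative (geomSumAddC c n)).eval x = ((n : R) + 2) * x ^ (n + 1) + c - 1 := by
  have h := congrArg (fun p => (derivative p).eval x) (X_sub_one_mul_geomSumAddC_sub_C c n)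
  simp only [derivative_mul, derivative_sub, derivative_X, derivative_one, derivative_C,
    derivative_X_pow, eval_add, eval_mul, eval_sub, eval_X, eval_one, eval_C, eval_zero, eval_pow,
    hx] at h
  push_cast at h
  linear_combination h

variable [Nontrivial R]

theorem natDegree_geomSumAddC (c : R) (n : ℕ) : (geomSumAddC c n).natDegree = n + 1 := by
  refine natDegree_eq_of_le_of_coeff_ne_zero ?_ (by simp [coeff_geomSumAddC_succ])
  rw [natDegree_le_iff_coeff_eq_zero]
  rintro (_ | m) hm
  · omega
  · rw [coeff_geomSumAddC_succ, if_neg (by omega)]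

theorem monic_geomSumAddC (c : R) (n : ℕ) : (geomSumAddC c n).Monic := by
  rw [Monic, leadingCoeff, natDegree_geomSumAddC, coeff_geomSumAddC_succ, if_pos le_rfl]

theorem sub_one_mul_coeff_geomSumAddC_divByMonic (c a : R) (n k : ℕ) :
    (a - 1) * (geomSumAddC c n /ₘ (X - C a)).coeff k = a ^ (n + 1 - k) - 1 := by
  have hcoeff : ∀ i ∈ Icc (k + 1) (n + 1), a ^ (i - (k + 1)) * (geomSumAddC c n).coeff i =
      a ^ (i - (k + 1)) := by
    intro i hi
    obtain ⟨m, rfl⟩ : ∃ m, i = m + 1 := ⟨i - 1, by grind⟩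
    rw [coeff_geomSumAddC_succ, if_pos (by grind), mul_one]
  rw [coeff_divByMonic_X_sub_C, natDegree_geomSumAddC, sum_congr rfl hcoeff,
    ← Ico_add_one_right_eq_Icc, sum_Ico_eq_sum_range]
  simp only [add_tsub_cancel_left, show n + 1 + 1 - (k + 1) = n + 1 - k by omega]
  rw [mul_comm, geom_sum_mul]

end GeomSumAddC

theorem stmt5_general (n : ℕ) (c : ℝ) (hc : 1 < c) (μ : Fin (n + 1) → ℂ)
    (hinj : Function.Injective μ)
    (hroot : ∀ j, (c : ℂ) + ∑ l ∈ Finset.range (n + 1), μ j ^ (l + 1) = 0) :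
    ∀ j k : Fin (n + 1),
      (Lagrange.basis Finset.univ μ j).coeff (k : ℕ) =
        (μ j ^ (n + 1 - (k : ℕ)) - 1) / (((n : ℂ) + 2) * μ j ^ (n + 1) + (c : ℂ) - 1) := by
  intro j k
  have hP : ∀ i, (geomSumAddC (c : ℂ) n).eval (μ i) = 0 := by
    simpa only [eval_geomSumAddC] using hroot
  have hnodal : Lagrange.nodal univ μ = geomSumAddC (c : ℂ) n :=
    Lagrange.nodal_eq_of_monic_of_eval_eq_zero hinj.injOn (monic_geomSumAddC _ _)
      (by rw [natDegree_geomSumAddC, card_univ, Fintype.card_fin]) fun i _ => hP i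
  have hμj : μ j - 1 ≠ 0 := by
    rw [sub_ne_zero]
    intro h
    have h1 : (c : ℂ) + (n + 1) = 0 := by simpa [h] using hroot j
    have h2 : c + (n + 1) = 0 := by exact_mod_cast h1
    linarith [(n.cast_nonneg : (0 : ℝ) ≤ n)]
  rw [Lagrange.coeff_basis (mem_univ j), hnodal, ← mul_div_mul_left _ _ hμj,
    sub_one_mul_coeff_geomSumAddC_divByMonic, sub_one_mul_eval_derivative_geomSumAddC (hP j)]

/-- Let `μ₁, …, μ_{n+1}` be the distinct roots of `c + μ + ⋯ + μ^{n+1} = 0` with `c > 1`,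
and let `L_j` be the `j`-th Lagrange basis polynomial at these nodes.  Then the coefficient
of `μ^{k}` in `L_j` equals `(μ_j^{n+1−k} − 1)/((n+2)μ_j^{n+1} + c − 1)`
(in the paper's 1-based indexing, `L_{jk} = (μ_j^{n+2−k} − 1)/((n+2)μ_j^{n+1} + c − 1)`). -/
theorem stmt5 (n : ℕ) (hn : 1 ≤ n) (c : ℝ) (hc : 1 < c) (μ : Fin (n + 1) → ℂ)
    (hinj : Function.Injective μ)
    (hroot : ∀ j, (c : ℂ) + ∑ l ∈ Finset.range (n + 1), μ j ^ (l + 1) = 0) :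
    ∀ j k : Fin (n + 1),
      (Lagrange.basis Finset.univ μ j).coeff (k : ℕ) =
        (μ j ^ (n + 1 - (k : ℕ)) - 1) / (((n : ℂ) + 2) * μ j ^ (n + 1) + (c : ℂ) - 1) :=
  stmt5_general n c hc μ hinj hroot
end

section
/- Under the hypotheses c > 1 and n > 11, the Lagrange coefficients L_{jk} = (μ_j^{1−k} − μ_j^{−n−1})/(n + 2 + (c−1)μ_j^{−n−1}) of the interpolation at the roots μ₁, …, μ_{n+1} of c + μ + ⋯ + μ^{n+1} = 0 satisfy |L_{jk}| < 4/n for all 1 ≤ j, k ≤ n+1. -/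
/-!
Write `q = μ_j`. The nodal polynomial of the `μ_i` is `c + X + ⋯ + X^{n+1}`, so synthetic division
by `X - q` shows that `(q - 1)` times the `k`-th coefficient of `∏_{i ≠ j} (X - μ_i)` is
`q^{n+1-k} - 1`, and `(q - 1)` times its value at `q` is `D = (n+2) q^{n+1} + c - 1`. Hence
`L_{jk} D = q^{n+1-k} - 1`, whose norm is below `2‖q‖^{n+1}` because `‖q‖ > 1`.

It remains to see `‖D‖ > (n/2)‖q‖^{n+1}`. Put `w = (c-1) q - c = -q^{n+2}`; then `D q = c - (n+1) w`,
so otherwise `‖c - (n+1) w‖ ≤ (n/2)‖w‖`. This confines `w + c = (c-1) q` to a sector so thin that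
`(n+2)|arg q| < π/2`, making `Re ((c-1) q)^{n+2} = -(c-1)^{n+2} Re w` positive, while `Re w > 0`.
-/

open scoped Real
open Polynomial Finset

section Algebra

variable {R : Type*} [CommRing R]

lemma pow_eq_of_add_sum_pow_succ_eq_zero {c z : R} {n : ℕ}
    (h : c + ∑ l ∈ range (n + 1), z ^ (l + 1) = 0) : z ^ (n + 2) = c - (c - 1) * z := by
  have hshift : ∑ l ∈ range (n + 1), z ^ (l + 1) = z * ∑ l ∈ range (n + 1), z ^ l := by
    simp only [mul_sum, pow_succ']
  linear_combination (z - 1) * h - (z - 1) * hshift - z * geom_sum_mul z (n + 1)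

lemma sub_one_mul_coeff_of_coeff_mul_X_sub_C {N : R[X]} {q : R} {n : ℕ} (hN : N.natDegree ≤ n)
    (h : ∀ m ≤ n, (N * (X - C q)).coeff (m + 1) = 1) {m : ℕ} (hm : m ≤ n + 1) :
    (q - 1) * N.coeff m = q ^ (n + 1 - m) - 1 := by
  obtain ⟨d, hd, rfl⟩ : ∃ d ≤ n + 1, m = n + 1 - d := ⟨n + 1 - m, by omega, by omega⟩
  rw [Nat.sub_sub_self hd]
  induction d with
  | zero => simp [coeff_eq_zero_of_natDegree_lt (Nat.lt_succ_of_le hN)]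
  | succ d ih =>
    have hstep := h (n - d) (by omega)
    rw [coeff_mul_X_sub_C, show n - d + 1 = n + 1 - d by omega] at hstep
    rw [show n + 1 - (d + 1) = n - d by omega]
    linear_combination (q - 1) * hstep + q * ih (by omega) (by omega)

lemma sub_one_mul_eval_of_coeff_mul_X_sub_C {N : R[X]} {q c : R} {n : ℕ} (hN : N.natDegree ≤ n)
    (h : ∀ m ≤ n, (N * (X - C q)).coeff (m + 1) = 1)
    (hq : c + ∑ l ∈ range (n + 1), q ^ (l + 1) = 0) :
    (q - 1) * N.eval q = ((n : R) + 2) * q ^ (n + 1) + (c - 1) := by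
  have hterm : ∀ m ∈ range (n + 1), (q - 1) * (N.coeff m * q ^ m) = q ^ (n + 1) - q ^ m := by
    intro m hm
    rw [← mul_assoc, sub_one_mul_coeff_of_coeff_mul_X_sub_C hN h (by simp at hm; omega), sub_mul,
      pow_sub_mul_pow q (by simp at hm; omega), one_mul]
  rw [eval_eq_sum_range' (Nat.lt_succ_of_le hN), mul_sum, sum_congr rfl hterm, sum_sub_distrib,
    sum_const, card_range, nsmul_eq_mul]
  have hshift := sum_range_succ' (fun l ↦ q ^ l) (n + 1)
  rw [sum_range_succ] at hshift
  push_cast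
  linear_combination -hq - hshift

noncomputable def constAddGeomSum (c : R) (n : ℕ) : R[X] :=
  C c + ∑ l ∈ range (n + 1), X ^ (l + 1)

lemma coeff_constAddGeomSum_succ (c : R) (n m : ℕ) :
    (constAddGeomSum c n).coeff (m + 1) = if m ≤ n then 1 else 0 := by
  simp [constAddGeomSum, coeff_X_pow]

lemma eval_constAddGeomSum (c z : R) (n : ℕ) :
    (constAddGeomSum c n).eval z = c + ∑ l ∈ range (n + 1), z ^ (l + 1) := by
  simp [constAddGeomSum, eval_finsetSum]

end Algebra

lemma nodal_eq_constAddGeomSum {R : Type*} [CommRing R] [IsDomain R] {n : ℕ} {c : R}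
    {μ : Fin (n + 1) → R} (hinj : Function.Injective μ)
    (hroot : ∀ j, c + ∑ l ∈ range (n + 1), μ j ^ (l + 1) = 0) :
    Lagrange.nodal univ μ = constAddGeomSum c n := by
  refine eq_of_degree_sub_lt_of_eval_index_eq univ hinj.injOn ?_ fun j _ ↦ ?_
  · rw [degree_lt_iff_coeff_zero]
    intro m hm
    have hdeg : (Lagrange.nodal univ μ).natDegree = n + 1 := by simp
    obtain ⟨m, rfl⟩ : ∃ m', m = m' + 1 := ⟨m - 1, by simp at hm; omega⟩
    rw [coeff_sub, coeff_constAddGeomSum_succ]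
    rcases (show n ≤ m by simpa using hm).eq_or_lt with rfl | h
    · have hlead := (Lagrange.nodal_monic (s := univ) (v := μ)).coeff_natDegree
      rw [hdeg] at hlead
      simp [hlead]
    · rw [coeff_eq_zero_of_natDegree_lt (by omega), if_neg (by omega), sub_zero]
  · rw [Lagrange.eval_nodal_at_node (mem_univ j), eval_constAddGeomSum, hroot]

lemma lagrange_basis_coeff_mul_eq {F : Type*} [Field F] {n : ℕ} {c : F} {μ : Fin (n + 1) → F}
    (hinj : Function.Injective μ) (hroot : ∀ j, c + ∑ l ∈ range (n + 1), μ j ^ (l + 1) = 0)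
    (j : Fin (n + 1)) {k : ℕ} (hk : k ≤ n + 1) :
    (Lagrange.basis univ μ j).coeff k * (((n : F) + 2) * μ j ^ (n + 1) + (c - 1))
      = μ j ^ (n + 1 - k) - 1 := by
  set N := Lagrange.nodal (univ.erase j) μ
  have hN : N.natDegree ≤ n := by simp [N]
  have hcoeff : ∀ m ≤ n, (N * (X - C (μ j))).coeff (m + 1) = 1 := by
    intro m hm
    rw [mul_comm, ← Lagrange.nodal_eq_mul_nodal_erase (mem_univ j),
      nodal_eq_constAddGeomSum hinj hroot, coeff_constAddGeomSum_succ, if_pos hm]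
  have hbasis : Lagrange.basis univ μ j = C (N.eval (μ j))⁻¹ * N := by
    rw [Lagrange.basis_eq_prod_sub_inv_mul_nodal_div (mem_univ j),
      ← Lagrange.nodal_erase_eq_nodal_div (mem_univ j), Lagrange.nodalWeight_eq_eval_nodal_erase_inv]
  have hne : N.eval (μ j) ≠ 0 :=
    Lagrange.eval_nodal_not_at_node fun i hi ↦ hinj.ne (ne_of_mem_erase hi).symm
  rw [hbasis, coeff_C_mul, ← sub_one_mul_eval_of_coeff_mul_X_sub_C hN hcoeff (hroot j),
    ← sub_one_mul_coeff_of_coeff_mul_X_sub_C hN hcoeff hk]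
  field_simp

lemma Real.abs_le_abs_tan_s6 {x : ℝ} (hx : |x| < π / 2) : |x| ≤ |Real.tan x| := by
  rcases le_or_gt 0 x with h | h
  · rw [abs_of_nonneg h] at hx ⊢
    exact (Real.le_tan h hx).trans (le_abs_self _)
  · rw [abs_of_neg h] at hx ⊢
    exact (Real.le_tan (by linarith) hx).trans (by rw [Real.tan_neg]; exact neg_le_abs _)

lemma Complex.abs_arg_le_abs_im_div_re_s6 {z : ℂ} (hz : 0 < z.re) : |arg z| ≤ |z.im| / z.re := by
  have := Real.abs_le_abs_tan_s6 (abs_arg_lt_pi_div_two_iff.mpr (Or.inl hz))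
  rwa [tan_arg, abs_div, abs_of_pos hz] at this

lemma Complex.re_pow_pos {z : ℂ} {m : ℕ} (hz : 0 < z.re) (h : m * |z.im| < π / 2 * z.re) :
    0 < (z ^ m).re := by
  have hz0 : z ≠ 0 := fun h0 ↦ by simp [h0] at hz
  have hangle : m * |arg z| < π / 2 := by
    calc m * |arg z| ≤ m * (|z.im| / z.re) := by
          gcongr; exact abs_arg_le_abs_im_div_re_s6 hz
      _ < π / 2 := by rwa [← mul_div_assoc, div_lt_iff₀ hz]
  have hcos : Real.cos (arg (z ^ m)) = Real.cos (m * arg z) := by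
    rw [← Real.Angle.cos_coe, arg_pow_coe_angle, ← Real.Angle.coe_nsmul, Real.Angle.cos_coe,
      nsmul_eq_mul]
  rw [← Nat.abs_cast, ← abs_mul] at hangle
  rw [← norm_mul_cos_arg, hcos]
  exact mul_pos (norm_pos_iff.mpr (pow_ne_zero m hz0)) (Real.cos_pos_of_mem_Ioo (abs_lt.mp hangle))

-- Any constant below `π / 2` in place of `6 / 5` would do.
lemma re_pos_and_abs_im_le_of_norm_sub_le {N c : ℝ} {w : ℂ} (hN : 12 ≤ N) (hc : 0 < c)
    (h : ‖(c : ℂ) - (N + 1) * w‖ ≤ N / 2 * ‖w‖) :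
    0 < w.re ∧ (N + 2) * |w.im| ≤ 6 / 5 * (w.re + c) := by
  set u := w.re
  set v := w.im
  have hsq : (c - (N + 1) * u) ^ 2 + ((N + 1) * v) ^ 2 ≤ (N / 2) ^ 2 * (u ^ 2 + v ^ 2) := by
    have h2 := pow_le_pow_left₀ (norm_nonneg _) h 2
    rw [mul_pow, Complex.sq_norm, Complex.sq_norm, Complex.normSq_apply, Complex.normSq_apply] at h2
    simp only [Complex.sub_re, Complex.sub_im, Complex.mul_re, Complex.mul_im, Complex.add_re,
      Complex.add_im, Complex.ofReal_re, Complex.ofReal_im, Complex.one_re, Complex.one_im] at h2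
    nlinarith
  have hu : 0 < u := by
    by_contra! h
    have f1 : 0 < c - (N + 1) * u + N / 2 * u := by nlinarith
    have f2 : 0 < c - (N + 1) * u - N / 2 * u := by nlinarith
    nlinarith [mul_pos f1 f2, sq_nonneg v]
  have hu_le : (N + 2) * u ≤ 2 * c := by
    by_contra! h
    have f1 : 0 < (N / 2 + 1) * u - c := by nlinarith
    have f2 : 0 < (3 * N / 2 + 1) * u - c := by nlinarith
    nlinarith [mul_pos f1 f2, sq_nonneg v]
  have hv_sq : 3 * v ^ 2 ≤ u ^ 2 := by
    nlinarith [sq_nonneg (c - (N + 1) * u), sq_nonneg v,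
      mul_nonneg (sq_nonneg v) (by linarith : (0:ℝ) ≤ N)]
  have hv : |v| ≤ 3 / 5 * u := by nlinarith [sq_abs v, abs_nonneg v]
  refine ⟨hu, ?_⟩
  nlinarith [abs_nonneg v]

lemma half_mul_norm_pow_lt_norm {n : ℕ} {c : ℝ} {z : ℂ} (hn : 12 ≤ n) (hc : 1 < c)
    (hz : z ^ (n + 2) = c - (c - 1) * z) :
    (n : ℝ) / 2 * ‖z‖ ^ (n + 1) < ‖((n : ℂ) + 2) * z ^ (n + 1) + (c - 1)‖ := by
  by_contra! hle
  set w : ℂ := (c - 1) * z - c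
  have hw_norm : ‖w‖ = ‖z‖ ^ (n + 2) := by
    rw [← norm_pow, show w = -z ^ (n + 2) by rw [hz]; ring, norm_neg]
  have hw : ‖(c : ℂ) - ((n : ℝ) + 1 : ℝ) * w‖ ≤ n / 2 * ‖w‖ := by
    have hid : (c : ℂ) - ((n : ℝ) + 1 : ℝ) * w = (((n : ℂ) + 2) * z ^ (n + 1) + (c - 1)) * z := by
      push_cast
      linear_combination (-(n : ℂ) - 2) * hz
    rw [hid, norm_mul, hw_norm, pow_succ ‖z‖, ← mul_assoc]
    exact mul_le_mul_of_nonneg_right hle (norm_nonneg z)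
  obtain ⟨hu, hv⟩ := re_pos_and_abs_im_le_of_norm_sub_le (N := n) (c := c) (by exact_mod_cast hn)
    (by linarith) (by exact_mod_cast hw)
  have hpos : 0 < ((w + c) ^ (n + 2)).re := by
    refine Complex.re_pow_pos (by simp; linarith) ?_
    have := Real.pi_gt_three
    push_cast
    simp only [Complex.add_re, Complex.add_im, Complex.ofReal_re, Complex.ofReal_im, add_zero]
    nlinarith
  have hpow : (w + c) ^ (n + 2) = -(((c - 1) ^ (n + 2) : ℝ) : ℂ) * w := by
    push_cast
    rw [show w + c = (c - 1) * z by ring, mul_pow, hz]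
    ring
  rw [hpow, neg_mul, Complex.neg_re, Complex.re_ofReal_mul] at hpos
  have : 0 < (c - 1) ^ (n + 2) := pow_pos (by linarith) _
  nlinarith

lemma one_lt_norm_of_pow_eq {m : ℕ} {c : ℝ} {z : ℂ} (hc : 1 < c)
    (hz : z ^ m = c - (c - 1) * z) (hz1 : z ≠ 1) : 1 < ‖z‖ := by
  by_contra! hle
  have hre_le : z.re ≤ 1 := (Complex.re_le_norm z).trans hle
  have hpow_le : ‖z‖ ^ m ≤ 1 := pow_le_one₀ (norm_nonneg z) hle
  have hre_rhs : 1 ≤ c - (c - 1) * z.re := by nlinarith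
  have hrhs : c - (c - 1) * z.re ≤ ‖z‖ ^ m := by
    rw [← norm_pow, hz]
    simpa using Complex.re_le_norm ((c : ℂ) - (c - 1) * z)
  have hre : z.re = 1 := by nlinarith
  have him : z.im = 0 := by
    rw [← Complex.abs_re_eq_norm, hre, abs_one]
    exact le_antisymm (hre ▸ Complex.re_le_norm z) hle
  exact hz1 (Complex.ext hre him)

lemma one_lt_norm_of_add_sum_pow_succ_eq_zero {n : ℕ} {c : ℝ} {z : ℂ} (hc : 1 < c)
    (h : (c : ℂ) + ∑ l ∈ range (n + 1), z ^ (l + 1) = 0) : 1 < ‖z‖ := by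
  refine one_lt_norm_of_pow_eq hc (pow_eq_of_add_sum_pow_succ_eq_zero h) ?_
  rintro rfl
  have := congrArg Complex.re h
  simp at this
  linarith

lemma norm_pow_sub_one_lt_two_mul_norm_pow {𝕜 : Type*} [NormedDivisionRing 𝕜] {z : 𝕜}
    (hz : 1 < ‖z‖) {a b : ℕ} (hab : a ≤ b) (hb : b ≠ 0) : ‖z ^ a - 1‖ < 2 * ‖z‖ ^ b :=
  calc ‖z ^ a - 1‖ ≤ ‖z‖ ^ a + 1 := by simpa using norm_sub_le (z ^ a) 1
    _ ≤ ‖z‖ ^ b + 1 := by gcongr; exact hz.le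
    _ < 2 * ‖z‖ ^ b := by linarith [one_lt_pow₀ hz hb]

/-- For `c > 1` and `n > 11`, the Lagrange coefficients of interpolation at the roots
`μ₁, …, μ_{n+1}` of `c + μ + ⋯ + μ^{n+1} = 0` satisfy `|L_{jk}| < 4/n`. -/
theorem stmt6 (n : ℕ) (hn : 11 < n) (c : ℝ) (hc : 1 < c) (μ : Fin (n + 1) → ℂ)
    (hinj : Function.Injective μ)
    (hroot : ∀ j, (c : ℂ) + ∑ l ∈ Finset.range (n + 1), μ j ^ (l + 1) = 0) :
    ∀ j k : Fin (n + 1),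
      ‖(Lagrange.basis Finset.univ μ j).coeff (k : ℕ)‖ < 4 / (n : ℝ) := by
  intro j k
  set L := (Lagrange.basis univ μ j).coeff k
  have hnorm := one_lt_norm_of_add_sum_pow_succ_eq_zero hc (hroot j)
  have hden := half_mul_norm_pow_lt_norm hn hc (pow_eq_of_add_sum_pow_succ_eq_zero (hroot j))
  have hnum := norm_pow_sub_one_lt_two_mul_norm_pow hnorm (Nat.sub_le (n + 1) k) n.succ_ne_zero
  have hLD := congrArg norm (lagrange_basis_coeff_mul_eq hinj hroot j k.isLt.le)
  rw [norm_mul] at hLD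
  have hLden := mul_le_mul_of_nonneg_left hden.le (norm_nonneg L)
  have hR : 0 < ‖μ j‖ ^ (n + 1) := by positivity
  rw [lt_div_iff₀ (by positivity)]
  nlinarith
end

section
/- Let μ₁, …, μ_{n+1} be the distinct roots of c + μ + ⋯ + μ^{n+1} = 0 (c > 1) and let V be the (n+1)×(n+1) matrix with entries V_{1k} = (μ_k − 1)/τ and V_{jk} = μ_k^j − μ_k for 2 ≤ j ≤ n+1, where τ > 0. Then with W = V^{−1}, the column sums of W satisfy ∑_{j=1}^{n+1} W_{jk} = −1/(n+c+1) for every k > 1, and ∑_{j=1}^{n+1} W_{j1} = −(n+1)τ/(n+c+1). -/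
/-!
The row vector `x` with `x₁ = -(n+1)τ/(n+c+1)` and `xⱼ = -1/(n+c+1)` for `j > 1` satisfies
`x V = (1, …, 1)`: summing the rows of `V` with these weights reduces, column by column, to the
root equation `c + μ + ⋯ + μ^{n+1} = 0`. Hence `x = (1, …, 1) V⁻¹` is the vector of column sums
of `V⁻¹`, as soon as `V` is invertible. For that, row operations turn `V` into
`diag(τ⁻¹, 1, …, 1) · Vandermonde(μ)ᵀ · diag(μ_k - 1)`, which is invertible because the roots are
distinct and none of them equals `1`.
-/

open Finset Matrix

theorem Matrix.sum_inv_apply_of_vecMul_eq_one {R ι : Type*} [CommRing R] [Fintype ι]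
    [DecidableEq ι] {A : Matrix ι ι R} (hA : IsUnit A.det) {x : ι → R} (hx : x ᵥ* A = 1)
    (k : ι) : ∑ j, A⁻¹ j k = x k := by
  have : x = 1 ᵥ* A⁻¹ := by
    rw [← hx, vecMul_vecMul, mul_nonsing_inv A hA, vecMul_one]
  rw [this, one_vecMul]
  exact (Finset.sum_apply k _ _).symm

section

variable {K : Type*} [Field K] {n : ℕ}

def eigenvectorMatrix (τ : K) (μ : Fin (n + 1) → K) : Matrix (Fin (n + 1)) (Fin (n + 1)) K :=
  .of fun i k => if (i : ℕ) = 0 then (μ k - 1) / τ else μ k ^ ((i : ℕ) + 1) - μ k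

theorem det_eigenvectorMatrix (τ : K) (μ : Fin (n + 1) → K) :
    (eigenvectorMatrix τ μ).det = τ⁻¹ * (∏ k, (μ k - 1)) * (vandermonde μ).det := by
  let d : Fin (n + 1) → K := fun i => if (i : ℕ) = 0 then τ⁻¹ else 1
  have hd : ∏ i, d i = τ⁻¹ := by simp [d]
  -- subtracting row `i` from row `i + 1` (for `i ≥ 1`) leaves the rows `μ_k ^ (i + 1) - μ_k ^ i`
  have hrows : (eigenvectorMatrix τ μ).det =
      (diagonal d * (vandermonde μ)ᵀ * diagonal fun k => μ k - 1).det := by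
    refine det_eq_of_forall_row_eq_smul_add_pred (fun i => if (i : ℕ) = 0 then 0 else 1) ?_ ?_
    · intro k
      simp [eigenvectorMatrix, d, div_eq_inv_mul]
    · intro i k
      rcases (i : ℕ).eq_zero_or_pos with hi | hi
      · simp [eigenvectorMatrix, d, hi]
        ring
      · have hi' : i.castSucc ≠ 0 := Fin.ne_of_val_ne (by simp [hi.ne'])
        simp [eigenvectorMatrix, d, hi.ne', hi']
        ring
  rw [hrows, det_mul, det_mul, det_diagonal, det_diagonal, det_transpose, hd]
  ring


theorem ne_one_of_add_sum_pow_eq_zero {c x : K} (hK : (n : K) + c + 1 ≠ 0)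
    (hx : c + ∑ l ∈ range (n + 1), x ^ (l + 1) = 0) : x ≠ 1 := by
  rintro rfl
  apply hK
  simp only [one_pow, sum_const, card_range, nsmul_eq_mul, mul_one, Nat.cast_succ] at hx
  linear_combination hx

theorem vecMul_eigenvectorMatrix {c τ : K} {μ : Fin (n + 1) → K} (hτ : τ ≠ 0)
    (hK : (n : K) + c + 1 ≠ 0) (hroot : ∀ k, c + ∑ l ∈ range (n + 1), μ k ^ (l + 1) = 0) :
    (fun j : Fin (n + 1) =>
        if (j : ℕ) = 0 then -((n : K) + 1) * τ / ((n : K) + c + 1) else -1 / ((n : K) + c + 1))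
      ᵥ* eigenvectorMatrix τ μ = 1 := by
  funext k
  have hsum := hroot k
  rw [sum_range_succ'] at hsum
  simp only [vecMul, dotProduct, Fin.sum_univ_succ, eigenvectorMatrix, of_apply, Fin.val_zero,
    Fin.val_succ, if_pos, Nat.succ_ne_zero, if_false, Pi.one_apply]
  rw [Fin.sum_univ_eq_sum_range (fun i => -1 / ((n : K) + c + 1) * (μ k ^ (i + 1 + 1) - μ k)),
    ← mul_sum, sum_sub_distrib, sum_const, card_range, nsmul_eq_mul]
  field_simp
  linear_combination -hsum

end

theorem stmt7_general (n : ℕ) (c τ : ℝ) (hc : 1 < c) (hτ : 0 < τ)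
    (μ : Fin (n + 1) → ℂ) (hinj : Function.Injective μ)
    (hroot : ∀ k, (c : ℂ) + ∑ l ∈ Finset.range (n + 1), μ k ^ (l + 1) = 0)
    (V : Matrix (Fin (n + 1)) (Fin (n + 1)) ℂ)
    (hV : ∀ i k, V i k =
      if (i : ℕ) = 0 then (μ k - 1) / (τ : ℂ) else μ k ^ ((i : ℕ) + 1) - μ k) :
    (∀ k : Fin (n + 1), (k : ℕ) ≠ 0 →
        ∑ j, V⁻¹ j k = -1 / ((n : ℂ) + (c : ℂ) + 1)) ∧
      ∑ j, V⁻¹ j 0 = -((n : ℂ) + 1) * (τ : ℂ) / ((n : ℂ) + (c : ℂ) + 1) := by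
  obtain rfl : V = eigenvectorMatrix (τ : ℂ) μ := Matrix.ext hV
  have hτ' : (τ : ℂ) ≠ 0 := Complex.ofReal_ne_zero.mpr hτ.ne'
  have hK : (n : ℂ) + c + 1 ≠ 0 := by
    have : (0 : ℝ) < n + c + 1 := by linarith [n.cast_nonneg (α := ℝ)]
    exact_mod_cast this.ne'
  have hdet : IsUnit (eigenvectorMatrix (τ : ℂ) μ).det := by
    rw [isUnit_iff_ne_zero, det_eigenvectorMatrix]
    refine mul_ne_zero (mul_ne_zero (inv_ne_zero hτ') ?_) (det_vandermonde_ne_zero_iff.mpr hinj)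
    exact prod_ne_zero_iff.mpr fun k _ =>
      sub_ne_zero.mpr (ne_one_of_add_sum_pow_eq_zero hK (hroot k))
  have hcol := Matrix.sum_inv_apply_of_vecMul_eq_one hdet (vecMul_eigenvectorMatrix hτ' hK hroot)
  exact ⟨fun k hk => by simp [hcol, hk], by simp [hcol]⟩

/-- Column sums of `W = V⁻¹`, where `V` is the eigenvector matrix with
`V_{1k} = (μ_k − 1)/τ` and `V_{jk} = μ_k^j − μ_k` for `2 ≤ j ≤ n+1`, built from the
distinct roots `μ₁, …, μ_{n+1}` of `c + μ + ⋯ + μ^{n+1} = 0` (`c > 1`):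
`∑_j W_{jk} = −1/(n+c+1)` for `k > 1`, and `∑_j W_{j1} = −(n+1)τ/(n+c+1)`. -/
theorem stmt7 (n : ℕ) (hn : 1 ≤ n) (c τ : ℝ) (hc : 1 < c) (hτ : 0 < τ)
    (μ : Fin (n + 1) → ℂ) (hinj : Function.Injective μ)
    (hroot : ∀ k, (c : ℂ) + ∑ l ∈ Finset.range (n + 1), μ k ^ (l + 1) = 0)
    (V : Matrix (Fin (n + 1)) (Fin (n + 1)) ℂ)
    (hV : ∀ i k, V i k =
      if (i : ℕ) = 0 then (μ k - 1) / (τ : ℂ) else μ k ^ ((i : ℕ) + 1) - μ k) :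
    (∀ k : Fin (n + 1), (k : ℕ) ≠ 0 →
        ∑ j, V⁻¹ j k = -1 / ((n : ℂ) + (c : ℂ) + 1)) ∧
      ∑ j, V⁻¹ j 0 = -((n : ℂ) + 1) * (τ : ℂ) / ((n : ℂ) + (c : ℂ) + 1) :=
  stmt7_general n c τ hc hτ μ hinj hroot V hV
end

section
/- Let V be the eigenvector matrix of the time-discretization matrix B (with α = 1/τ + τ/β), built from the distinct roots μ₁, …, μ_{n+1} of c + μ + ⋯ + μ^{n+1} = 0 where c = β/τ² > 1. Then for n > 11, the inverse W = V^{−1} satisfies |W_{jk}| < (8 + 4τ(n+2))/n for all j, k; in particular ‖W‖₁ = O(1) and the condition number satisfies κ₁(V) = ‖V‖₁‖W‖₁ = O(cn). -/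
/-!
The inverse is explicit. With `p(X) = X^(n+2) + (c-1)X - c = (X-1)(c + X + ⋯ + X^(n+1))`,
row `j` of `V⁻¹` is `(-τc, μⱼ^n, μⱼ^(n-1), …, μⱼ) / (μⱼ p'(μⱼ))`, and `V⁻¹ V = 1` reduces to
geometric-sum identities between the roots. All entry bounds follow from `‖μ p'(μ)‖ ≥ (n+2)c/(n+3)` together with `|μ| ≥ 1`. If `μ p'(μ)` were
smaller, `μ` would have positive real part while `(n+1)μ^(n+2) = μ p'(μ) - c` has negative real
part; the argument of `μ` then exceeds `π/(2(n+2))`, so `|μ| ≤ (n+2)|Im μ|`, which is incompatible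
with `Im (μ p'(μ)) = -(n+1)(c-1) Im μ` being small.
-/

open Complex Finset
open scoped Real

/-- At a root `x` of `p(X) = X ^ (n + 2) + (c - 1) * X - c` this equals `x * p'(x)`. -/
noncomputable def rootDenom (n : ℕ) (c x : ℂ) : ℂ := (n + 2) * c - (n + 1) * (c - 1) * x

section Roots

variable {n : ℕ} {c x y : ℂ}

lemma sum_range_pow_succ_of_root (hx : c + ∑ l ∈ range (n + 1), x ^ (l + 1) = 0) :
    ∑ l ∈ range n, x ^ (l + 1) = -c - x ^ (n + 1) := by
  rw [sum_range_succ] at hx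
  linear_combination hx

lemma pow_add_two_of_root (hx : c + ∑ l ∈ range (n + 1), x ^ (l + 1) = 0) :
    x ^ (n + 2) = c - (c - 1) * x := by
  have hsum : ∑ l ∈ range (n + 1), x ^ (l + 1) = x * ∑ l ∈ range (n + 1), x ^ l := by
    simp only [mul_sum, pow_succ']
  rw [hsum] at hx
  linear_combination (x - 1) * hx - x * geom_sum_mul x (n + 1)

lemma rootDenom_sub (hx : x ^ (n + 2) = c - (c - 1) * x) :
    rootDenom n c x - c = (n + 1) * x ^ (n + 2) := by
  unfold rootDenom
  linear_combination (-(n + 1 : ℂ)) * hx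

lemma sum_pow_mul_pow_sub_of_root (hy : c + ∑ l ∈ range (n + 1), y ^ (l + 1) = 0) :
    -c * (x - 1) + ∑ i ∈ range n, y ^ (n - i) * (x ^ (i + 2) - x)
      = c + x ^ 2 * y * ∑ i ∈ range n, x ^ i * y ^ (n - 1 - i) + x * y ^ (n + 1) := by
  have hrefl : ∑ i ∈ range n, y ^ (n - i) = -c - y ^ (n + 1) := by
    rw [← sum_range_pow_succ_of_root hy, ← sum_range_reflect]
    refine sum_congr rfl fun i hi => ?_
    rw [mem_range] at hi
    rw [show n - (n - 1 - i) = i + 1 by omega]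
  have hsplit : ∀ i ∈ range n, y ^ (n - i) * (x ^ (i + 2) - x)
      = x ^ 2 * y * (x ^ i * y ^ (n - 1 - i)) - x * y ^ (n - i) := by
    intro i hi
    rw [mem_range] at hi
    rw [show n - i = n - 1 - i + 1 by omega]
    ring
  rw [sum_congr rfl hsplit, sum_sub_distrib, ← mul_sum, ← mul_sum, hrefl]
  ring

lemma sum_pow_mul_pow_sub_of_roots_of_ne (hx : c + ∑ l ∈ range (n + 1), x ^ (l + 1) = 0)
    (hy : c + ∑ l ∈ range (n + 1), y ^ (l + 1) = 0) (hxy : x ≠ y) :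
    -c * (x - 1) + ∑ i ∈ range n, y ^ (n - i) * (x ^ (i + 2) - x) = 0 := by
  rw [sum_pow_mul_pow_sub_of_root hy]
  refine (mul_eq_zero_iff_left (sub_ne_zero.2 hxy)).1 ?_
  linear_combination x ^ 2 * y * geom_sum₂_mul x y n + y * pow_add_two_of_root hx
    - x * pow_add_two_of_root hy

lemma sum_pow_mul_pow_sub_of_root_self (hx : c + ∑ l ∈ range (n + 1), x ^ (l + 1) = 0) :
    -c * (x - 1) + ∑ i ∈ range n, x ^ (n - i) * (x ^ (i + 2) - x) = rootDenom n c x := by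
  have hrel := pow_add_two_of_root hx
  rw [sum_pow_mul_pow_sub_of_root hx, geom_sum₂_self]
  unfold rootDenom
  rcases n with _ | n
  · simp only [CharP.cast_eq_zero, zero_tsub, pow_zero, mul_one, mul_zero, add_zero, zero_add,
      pow_one, one_mul]
    linear_combination hrel
  · simp only [Nat.cast_add, Nat.cast_one, add_tsub_cancel_right]
    linear_combination ((n : ℂ) + 2) * hrel

end Roots

lemma Complex.re_pow_eq_norm_pow_mul_cos (x : ℂ) (m : ℕ) :
    (x ^ m).re = ‖x‖ ^ m * Real.cos (m * arg x) := by
  conv_lhs => rw [← norm_mul_exp_arg_mul_I x]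
  rw [mul_pow, ← exp_nat_mul, ← ofReal_pow,
    show (m : ℂ) * (arg x * I) = ((m * arg x : ℝ) : ℂ) * I by push_cast; ring,
    re_ofReal_mul, exp_ofReal_mul_I_re]

lemma Complex.norm_le_mul_abs_im_of_re_pow_neg {x : ℂ} {m : ℕ} (hre : 0 < x.re)
    (hpow : (x ^ m).re < 0) : ‖x‖ ≤ m * |x.im| := by
  set θ := arg x
  have hθ : |θ| < π / 2 := abs_arg_lt_pi_div_two_iff.2 (Or.inl hre)
  have hcos : Real.cos (m * |θ|) < 0 := by
    have hx : 0 < ‖x‖ ^ m := pow_pos (norm_pos_iff.2 fun h => by simp [h] at hre) m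
    rw [re_pow_eq_norm_pow_mul_cos] at hpow
    rw [show (m : ℝ) * |θ| = |m * θ| by rw [abs_mul, Nat.abs_cast], Real.cos_abs]
    nlinarith
  have hmθ : π / 2 < m * |θ| := by
    by_contra! h
    exact hcos.not_ge (Real.cos_nonneg_of_neg_pi_div_two_le_of_le (by
      linarith [Real.pi_pos, mul_nonneg (Nat.cast_nonneg (α := ℝ) m) (abs_nonneg θ)]) h)
  have hsin : ‖x‖ * Real.sin |θ| = |x.im| := by
    rw [← norm_mul_sin_arg, abs_mul, abs_norm,
      Real.abs_sin_eq_sin_abs_of_abs_le_pi (by linarith [Real.pi_pos])]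
  calc ‖x‖ = ‖x‖ * (2 / π * (π / 2)) := by field_simp
    _ ≤ ‖x‖ * (2 / π * (m * |θ|)) := by gcongr
    _ = m * (‖x‖ * (2 / π * |θ|)) := by ring
    _ ≤ m * (‖x‖ * Real.sin |θ|) := by gcongr; exact Real.mul_le_sin (abs_nonneg θ) hθ.le
    _ = m * |x.im| := by rw [hsin]

section Bounds

variable {n : ℕ} {c : ℝ} {x : ℂ}

lemma one_le_norm_of_pow_eq (hc : 1 < c) (hx : x ^ (n + 2) = c - (c - 1) * x) : 1 ≤ ‖x‖ := by
  by_contra! h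
  have hlt : ‖x ^ (n + 2)‖ < 1 := by
    rw [norm_pow]
    exact pow_lt_one₀ (norm_nonneg _) h (by omega)
  have hge : c - (c - 1) * ‖x‖ ≤ ‖x ^ (n + 2)‖ := by
    rw [hx, ← ofReal_one, ← ofReal_sub]
    calc c - (c - 1) * ‖x‖ = ‖(c : ℂ)‖ - ‖((c - 1 : ℝ) : ℂ) * x‖ := by
          rw [norm_mul, norm_real, norm_real, Real.norm_of_nonneg (by linarith),
            Real.norm_of_nonneg (by linarith)]
      _ ≤ _ := norm_sub_norm_le _ _
  nlinarith

lemma le_norm_rootDenom (hc : 1 < c) (hx : x ^ (n + 2) = c - (c - 1) * x) :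
    (n + 2) * c ≤ (n + 3) * ‖rootDenom n c x‖ := by
  set F := rootDenom n c x
  set A := ‖F‖
  by_contra! hA
  have hAc : A < c := by nlinarith
  set s : ℝ := (n + 1) * (c - 1)
  have hs : 0 < s := by positivity
  have hF : F = ((n + 2) * c : ℝ) - (s : ℂ) * x := by
    simp only [F, s, rootDenom]; push_cast; ring
  have hre : 0 < x.re := by
    have hFre : F.re = (n + 2) * c - s * x.re := by simp [hF]
    have : 0 < s * x.re := by nlinarith [re_le_norm F]
    exact pos_of_mul_pos_right this hs.le
  have hpow : (x ^ (n + 2)).re < 0 := by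
    have h := congrArg re (rootDenom_sub hx)
    simp only [sub_re, ofReal_re, mul_re, add_re, natCast_re, one_re, add_im, natCast_im, one_im,
      add_zero, zero_mul, sub_zero] at h
    nlinarith [re_le_norm F]
  have him : s * |x.im| ≤ A := by
    have hFim : F.im = -(s * x.im) := by simp [hF]
    calc s * |x.im| = |F.im| := by rw [hFim, abs_neg, abs_mul, abs_of_pos hs]
      _ ≤ A := abs_im_le_norm F
  have hlow : (n + 2) * c - A ≤ s * ‖x‖ := by
    have hsx : (s : ℂ) * x = ((n + 2) * c : ℝ) - F := by rw [hF]; ring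
    have := norm_sub_norm_le (((n + 2) * c : ℝ) : ℂ) F
    rwa [← hsx, norm_real, Real.norm_of_nonneg (by positivity), norm_mul, norm_real,
      Real.norm_of_nonneg hs.le] at this
  have hnorm := norm_le_mul_abs_im_of_re_pow_neg hre hpow
  push_cast at hnorm
  nlinarith [mul_le_mul_of_nonneg_left hnorm hs.le]

lemma add_one_mul_norm_pow_le {m : ℕ} (hc : 1 < c) (hx : x ^ (n + 2) = c - (c - 1) * x)
    (hm : m ≤ n + 2) : (n + 1) * ‖x‖ ^ m ≤ ‖rootDenom n c x‖ + c := by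
  calc (n + 1) * ‖x‖ ^ m ≤ (n + 1) * ‖x‖ ^ (n + 2) := by
        gcongr
        exact one_le_norm_of_pow_eq hc hx
    _ = ‖rootDenom n c x - c‖ := by
        have hnorm : ‖(n + 1 : ℂ)‖ = n + 1 := by exact_mod_cast Complex.norm_natCast (n + 1)
        rw [rootDenom_sub hx, norm_mul, norm_pow, hnorm]
    _ ≤ ‖rootDenom n c x‖ + c := by
        simpa [abs_of_pos (zero_lt_one.trans hc)] using norm_sub_le (rootDenom n c x) c

end Bounds

noncomputable def eigvecMatrix (n : ℕ) (τ : ℂ) (μ : Fin (n + 1) → ℂ) :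
    Matrix (Fin (n + 1)) (Fin (n + 1)) ℂ :=
  Matrix.of fun i k => if (i : ℕ) = 0 then (μ k - 1) / τ else μ k ^ ((i : ℕ) + 1) - μ k

noncomputable def eigvecInv (n : ℕ) (τ c : ℂ) (μ : Fin (n + 1) → ℂ) :
    Matrix (Fin (n + 1)) (Fin (n + 1)) ℂ :=
  Matrix.of fun j k =>
    (if (k : ℕ) = 0 then -(τ * c) else μ j ^ (n + 1 - k)) / rootDenom n c (μ j)

lemma eigvecInv_mul_eigvecMatrix {n : ℕ} {τ c : ℂ} {μ : Fin (n + 1) → ℂ} (hτ : τ ≠ 0)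
    (hinj : Function.Injective μ) (hroot : ∀ k, c + ∑ l ∈ range (n + 1), μ k ^ (l + 1) = 0)
    (hE : ∀ j, rootDenom n c (μ j) ≠ 0) : eigvecInv n τ c μ * eigvecMatrix n τ μ = 1 := by
  ext j k
  have hfirst : eigvecInv n τ c μ j 0 * eigvecMatrix n τ μ 0 k
      = -c * (μ k - 1) / rootDenom n c (μ j) := by
    simp only [eigvecInv, eigvecMatrix, Matrix.of_apply, Fin.val_zero, if_true]
    field_simp
  have hrest : ∑ i : Fin n, eigvecInv n τ c μ j i.succ * eigvecMatrix n τ μ i.succ k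
      = (∑ i ∈ range n, μ j ^ (n - i) * (μ k ^ (i + 2) - μ k)) / rootDenom n c (μ j) := by
    rw [sum_div, ← Fin.sum_univ_eq_sum_range
      (fun i => μ j ^ (n - i) * (μ k ^ (i + 2) - μ k) / rootDenom n c (μ j))]
    refine sum_congr rfl fun i _ => ?_
    simp only [eigvecInv, eigvecMatrix, Matrix.of_apply, Fin.val_succ, Fin.succ_ne_zero,
      Fin.val_eq_zero_iff, Nat.reduceSubDiff, ↓reduceIte]
    ring
  rw [Matrix.mul_apply, Fin.sum_univ_succ, hfirst, hrest, ← add_div, Matrix.one_apply]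
  split_ifs with hjk
  · subst hjk
    rw [sum_pow_mul_pow_sub_of_root_self (hroot j), div_self (hE j)]
  · rw [sum_pow_mul_pow_sub_of_roots_of_ne (hroot k) (hroot j) (hinj.ne (Ne.symm hjk)), zero_div]

lemma norm_eigvecInv_apply_lt {n : ℕ} {τ c : ℝ} {μ : Fin (n + 1) → ℂ} (hn : 0 < n) (hτ : 0 < τ)
    (hc : 1 < c) (j k : Fin (n + 1)) (hμ : μ j ^ (n + 2) = c - (c - 1) * μ j) :
    ‖eigvecInv n τ c μ j k‖ < (8 + 4 * τ * ((n : ℝ) + 2)) / n := by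
  have hE := le_norm_rootDenom hc hμ
  have hn' : (0 : ℝ) < n := Nat.cast_pos.2 hn
  have hEpos : 0 < ‖rootDenom n c (μ j)‖ := by nlinarith
  have hcE : c ≤ 2 * ‖rootDenom n c (μ j)‖ := by nlinarith
  simp only [eigvecInv, Matrix.of_apply]
  split_ifs with hk
  · rw [norm_div, norm_neg, norm_mul, norm_real, norm_real, Real.norm_of_nonneg hτ.le,
      Real.norm_of_nonneg (by linarith), div_lt_div_iff₀ hEpos hn']
    nlinarith [mul_pos hτ hEpos, mul_le_mul_of_nonneg_left hcE (mul_nonneg hτ.le hn'.le)]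
  · have := add_one_mul_norm_pow_le hc hμ (show n + 1 - k ≤ n + 2 by omega)
    rw [norm_div, norm_pow, div_lt_div_iff₀ hEpos hn']
    nlinarith [mul_pos hτ hEpos, pow_nonneg (norm_nonneg (μ j)) (n + 1 - k)]

theorem stmt9_general (n : ℕ) (hn : 11 < n) (T τ c : ℝ) (hT : 0 < T)
    (hτ : τ = T / n) (hc : 1 < c)
    (μ : Fin (n + 1) → ℂ) (hinj : Function.Injective μ)
    (hroot : ∀ k, (c : ℂ) + ∑ l ∈ Finset.range (n + 1), μ k ^ (l + 1) = 0)
    (V : Matrix (Fin (n + 1)) (Fin (n + 1)) ℂ)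
    (hV : ∀ i k, V i k =
      if (i : ℕ) = 0 then (μ k - 1) / (τ : ℂ) else μ k ^ ((i : ℕ) + 1) - μ k) :
    ∀ j k : Fin (n + 1),
      ‖V⁻¹ j k‖ < (8 + 4 * τ * ((n : ℝ) + 2)) / n := by
  intro j k
  have hn0 : 0 < n := by omega
  have hτ0 : 0 < τ := by rw [hτ]; positivity
  have hrel : ∀ j, μ j ^ (n + 2) = c - (c - 1) * μ j := fun j => pow_add_two_of_root (hroot j)
  have hE : ∀ j, rootDenom n c (μ j) ≠ 0 := fun j h => by
    have := le_norm_rootDenom hc (hrel j)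
    rw [h, norm_zero, mul_zero] at this
    nlinarith
  have hVinv : V⁻¹ = eigvecInv n τ c μ := by
    rw [show V = eigvecMatrix n τ μ from Matrix.ext hV]
    exact Matrix.inv_eq_left_inv
      (eigvecInv_mul_eigvecMatrix (ofReal_ne_zero.2 hτ0.ne') hinj hroot hE)
  rw [hVinv]
  exact norm_eigvecInv_apply_lt hn0 hτ0 hc j k (hrel j)

/-- For `n > 11`, `τ = T/n`, `c = β/τ² > 1`, the inverse `W = V⁻¹` of the eigenvector
matrix `V` (built from the distinct roots of `c + μ + ⋯ + μ^{n+1} = 0`) satisfies the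
entrywise bound `|W_{jk}| < (8 + 4τ(n+2))/n`; in particular `‖W‖₁ = O(1)` and
`κ₁(V) = ‖V‖₁‖W‖₁ = O(cn)`. -/
theorem stmt9 (n : ℕ) (hn : 11 < n) (T β τ c : ℝ) (hT : 0 < T) (hβ : 0 < β)
    (hτ : τ = T / n) (hcdef : c = β / τ ^ 2) (hc : 1 < c)
    (μ : Fin (n + 1) → ℂ) (hinj : Function.Injective μ)
    (hroot : ∀ k, (c : ℂ) + ∑ l ∈ Finset.range (n + 1), μ k ^ (l + 1) = 0)
    (V : Matrix (Fin (n + 1)) (Fin (n + 1)) ℂ)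
    (hV : ∀ i k, V i k =
      if (i : ℕ) = 0 then (μ k - 1) / (τ : ℂ) else μ k ^ ((i : ℕ) + 1) - μ k) :
    ∀ j k : Fin (n + 1),
      ‖V⁻¹ j k‖ < (8 + 4 * τ * ((n : ℝ) + 2)) / n :=
  stmt9_general n hn T τ c hT hτ hc μ hinj hroot V hV
end

section
/- Let λ be an eigenvalue of the (n+1)×(n+1) matrix B with first row (α, 0, …, 0, 1/β), subdiagonal structure B_{j1} = −1 for j ≥ 2, B_{jj} = 1/τ for j ≥ 2, B_{j,j−1} = −1/τ for j ≥ 3, and zeros elsewhere, where α = 1/τ + τ/β. Then μ = 1/(1 − τλ) satisfies c + μ + μ² + ⋯ + μ^{n+1} = 0 with c = β/τ². Conversely each root μ of this equation gives an eigenvalue λ = (1 − 1/μ)/τ of B. -/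
/-!
Write `d = 1 - τλ`. Rows `2, …, n + 1` of `B v = λ v` read `d v_{k+1} = τ v_0 + v_k`, the term
`v_k` being absent for `k = 0`. If `d = 0` these force `v = 0`; otherwise, with `μ = 1/d`, they solve
to `v_k = τ v_0 (μ + ⋯ + μ^k)`, so `v_0 ≠ 0`, and substituting `v_n` into the first row and
cancelling `v_0` leaves exactly `β/τ² + μ + ⋯ + μ^{n+1} = 0`. Conversely, for a root `μ` the same
vector with `v_0 = 1` is an eigenvector for `λ = (1 - 1/μ)/τ`.
-/

/-- The time-discretization matrix `B` of the parameterized quasi-boundary value method: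
first row `(α, 0, …, 0, 1/β)`, first column entries `−1` from row 2 on, diagonal `1/τ`
from row 2 on, subdiagonal `−1/τ` from row 3 on. -/
noncomputable def Bmat (n : ℕ) (α τ β : ℝ) : Matrix (Fin (n + 1)) (Fin (n + 1)) ℝ :=
  fun i j =>
    if (i : ℕ) = 0 then
      (if (j : ℕ) = 0 then α else if (j : ℕ) = n then 1 / β else 0)
    else if (j : ℕ) = 0 then -1
    else if j = i then 1 / τ
    else if (j : ℕ) + 1 = (i : ℕ) then -1 / τ
    else 0

open Finset Function Matrix

lemma sum_range_succ_pow_succ {R : Type*} [CommRing R] (μ : R) (k : ℕ) :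
    ∑ l ∈ range (k + 1), μ ^ (l + 1) = μ * (1 + ∑ l ∈ range k, μ ^ (l + 1)) := by
  rw [sum_range_succ', mul_add, mul_sum, add_comm]
  simp [pow_succ']

lemma Bmat_map_mulVec_zero {n : ℕ} [NeZero n] (α τ β : ℝ) (v : Fin (n + 1) → ℂ) :
    ((Bmat n α τ β).map Complex.ofReal *ᵥ v) 0 = α * v 0 + v (Fin.last n) / β := by
  rw [Matrix.mulVec, dotProduct, Fintype.sum_eq_add 0 (Fin.last n) Fin.last_pos'.ne]
  · simp [Bmat, NeZero.ne n, div_eq_inv_mul]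
  · rintro j ⟨hj0, hjn⟩
    rw [Ne, Fin.ext_iff, Fin.val_zero] at hj0
    rw [Ne, Fin.ext_iff, Fin.val_last] at hjn
    simp [Bmat, hj0, hjn]

/-- `update v 0 0` accounts for the subdiagonal entry of row `2`, which the first column overrides. -/
lemma Bmat_map_mulVec_succ {n : ℕ} (α τ β : ℝ) (v : Fin (n + 1) → ℂ) (k : Fin n) :
    ((Bmat n α τ β).map Complex.ofReal *ᵥ v) k.succ =
      -v 0 + (v k.succ - update v 0 0 k.castSucc) / τ := by
  have hterm : ∀ j, (Bmat n α τ β).map Complex.ofReal k.succ j * v j =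
      (if j = 0 then -v j else 0) + (if j = k.succ then v j / τ else 0)
        - (if j = k.castSucc then update v 0 0 j / τ else 0) := by
    intro j
    simp only [Matrix.map_apply, Bmat, update_apply, Fin.ext_iff, Fin.val_succ, Fin.val_castSucc,
      Fin.val_zero]
    split_ifs <;> first | contradiction | omega | (push_cast; ring)
  simp only [Matrix.mulVec, dotProduct, hterm, sum_add_distrib, sum_sub_distrib, sum_ite_eq',
    mem_univ, if_true]
  ring

lemma Bmat_map_mulVec_eq_smul_iff {n : ℕ} [NeZero n] {α τ β : ℝ} (hτ : τ ≠ 0)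
    (v : Fin (n + 1) → ℂ) (lam : ℂ) :
    (Bmat n α τ β).map Complex.ofReal *ᵥ v = lam • v ↔
      α * v 0 + v (Fin.last n) / β = lam * v 0 ∧
        ∀ k : Fin n, (1 - τ * lam) * v k.succ = τ * v 0 + update v 0 0 k.castSucc := by
  have hτ' : (τ : ℂ) ≠ 0 := Complex.ofReal_ne_zero.mpr hτ
  simp only [funext_iff, Fin.forall_fin_succ, Pi.smul_apply, smul_eq_mul,
    Bmat_map_mulVec_zero, Bmat_map_mulVec_succ]
  refine and_congr Iff.rfl (forall_congr' fun k => ?_)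
  constructor <;> intro h
  · field_simp at h
    linear_combination h
  · field_simp
    linear_combination h

lemma update_zero_eq_of_recurrence {R : Type*} [CommRing R] {n : ℕ} {v : Fin (n + 1) → R}
    {a d μ : R} (hdμ : d * μ = 1)
    (h : ∀ k : Fin n, d * v k.succ = a + update v 0 0 k.castSucc) (i : Fin (n + 1)) :
    update v 0 0 i = a * ∑ l ∈ range i, μ ^ (l + 1) := by
  induction i using Fin.induction with
  | zero => simp
  | succ k ih =>
    rw [Fin.val_castSucc] at ih
    rw [update_of_ne k.succ_ne_zero, Fin.val_succ, sum_range_succ_pow_succ]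
    linear_combination μ * h k + μ * ih - v k.succ * hdμ

lemma first_row_eq_iff_root {τ β μ S : ℂ} (hτ : τ ≠ 0) (hβ : β ≠ 0) (hμ : μ ≠ 0) :
    1 / τ + τ / β + τ * S / β = (1 - 1 / μ) / τ ↔ β / τ ^ 2 + μ * (1 + S) = 0 := by
  constructor <;> intro h
  · field_simp at h ⊢
    linear_combination h
  · field_simp at h ⊢
    linear_combination h

lemma one_sub_mul_ne_zero_of_Bmat_eigenvector {n : ℕ} [NeZero n] {α τ β : ℝ} (hτ : τ ≠ 0)
    (hβ : β ≠ 0) {lam : ℂ} {v : Fin (n + 1) → ℂ} (hv : v ≠ 0)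
    (heig : (Bmat n α τ β).map Complex.ofReal *ᵥ v = lam • v) : 1 - τ * lam ≠ 0 := by
  obtain ⟨hrow, hrec⟩ := (Bmat_map_mulVec_eq_smul_iff hτ v lam).1 heig
  intro hd
  simp only [hd, zero_mul] at hrec
  have hv0 : v 0 = 0 := by
    have h := hrec 0
    rw [Fin.castSucc_zero, update_self] at h
    simpa [hτ] using h
  have hlast : v (Fin.last n) = 0 := by simpa [hv0, hβ] using hrow
  refine hv (funext fun i => ?_)
  induction i using Fin.lastCases with
  | last => exact hlast
  | cast k =>
    have h := hrec k
    rw [hv0, mul_zero, zero_add, (update_eq_self_iff.2 hv0.symm)] at h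
    exact h.symm

theorem root_of_Bmat_eigenvector {n : ℕ} [NeZero n] {τ β : ℝ} (hτ : τ ≠ 0) (hβ : β ≠ 0)
    {lam : ℂ} {v : Fin (n + 1) → ℂ} (hv : v ≠ 0)
    (heig : (Bmat n (1 / τ + τ / β) τ β).map Complex.ofReal *ᵥ v = lam • v) :
    ((β / τ ^ 2 : ℝ) : ℂ) + ∑ l ∈ range (n + 1), (1 / (1 - τ * lam)) ^ (l + 1) = 0 := by
  have hτ' : (τ : ℂ) ≠ 0 := Complex.ofReal_ne_zero.2 hτ
  have hβ' : (β : ℂ) ≠ 0 := Complex.ofReal_ne_zero.2 hβ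
  have hd := one_sub_mul_ne_zero_of_Bmat_eigenvector hτ hβ hv heig
  obtain ⟨hrow, hrec⟩ := (Bmat_map_mulVec_eq_smul_iff hτ v lam).1 heig
  set μ := 1 / (1 - τ * lam) with hμ
  have htail := update_zero_eq_of_recurrence (μ := μ) (mul_one_div_cancel hd) hrec
  have hv0 : v 0 ≠ 0 := fun hv0 => hv <| by
    have hupd : update v 0 0 = v := update_eq_self_iff.2 hv0.symm
    rw [← hupd]
    funext i
    simp [htail, hv0]
  have hlast : v (Fin.last n) = τ * v 0 * ∑ l ∈ range n, μ ^ (l + 1) := by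
    rw [← update_of_ne Fin.last_pos'.ne' 0 v, htail, Fin.val_last]
  have hlam : lam = (1 - 1 / μ) / τ := by
    rw [hμ, one_div_one_div]
    field_simp [hτ']
    ring
  have hrow' :
      1 / (τ : ℂ) + τ / β + τ * (∑ l ∈ range n, μ ^ (l + 1)) / β = (1 - 1 / μ) / τ := by
    rw [← hlam]
    apply mul_right_cancel₀ hv0
    rw [hlast] at hrow
    push_cast at hrow
    linear_combination hrow
  have hroot := (first_row_eq_iff_root hτ' hβ' (one_div_ne_zero hd)).1 hrow'
  rw [sum_range_succ_pow_succ]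
  push_cast
  exact hroot

theorem Bmat_eigenvector_of_root {n : ℕ} [NeZero n] {τ β : ℝ} (hτ : τ ≠ 0) (hβ : β ≠ 0) {μ : ℂ}
    (hroot : ((β / τ ^ 2 : ℝ) : ℂ) + ∑ l ∈ range (n + 1), μ ^ (l + 1) = 0) :
    ∃ v : Fin (n + 1) → ℂ, v ≠ 0 ∧
      (Bmat n (1 / τ + τ / β) τ β).map Complex.ofReal *ᵥ v = ((1 - 1 / μ) / τ) • v := by
  have hτ' : (τ : ℂ) ≠ 0 := Complex.ofReal_ne_zero.2 hτ
  have hβ' : (β : ℂ) ≠ 0 := Complex.ofReal_ne_zero.2 hβ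
  have hμ : μ ≠ 0 := by
    rintro rfl
    simp [hβ, hτ] at hroot
  rw [sum_range_succ_pow_succ] at hroot
  push_cast at hroot
  set S : Fin (n + 1) → ℂ := fun i => τ * ∑ l ∈ range i, μ ^ (l + 1)
  refine ⟨update S 0 1, fun h => by simpa using congrFun h 0, ?_⟩
  have hS : update (update S 0 1) 0 0 = S := by
    rw [update_idem, update_eq_self_iff]
    simp [S]
  rw [Bmat_map_mulVec_eq_smul_iff hτ, hS]
  constructor
  · have hrow := (first_row_eq_iff_root hτ' hβ' hμ).2 hroot
    simp only [update_self, update_of_ne Fin.last_pos'.ne', S, Fin.val_last]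
    push_cast
    linear_combination hrow
  · intro k
    simp only [update_self, update_of_ne k.succ_ne_zero, S, Fin.val_succ, Fin.val_castSucc,
      sum_range_succ_pow_succ]
    field_simp
    ring

/-- Eigenvalues `λ` of `B` (with `α = 1/τ + τ/β`) correspond to roots `μ = 1/(1−τλ)` of
`c + μ + ⋯ + μ^{n+1} = 0` with `c = β/τ²`, and conversely each root `μ` gives the
eigenvalue `λ = (1 − 1/μ)/τ` of `B`. -/
theorem stmt10 (n : ℕ) (hn : 1 ≤ n) (τ β : ℝ) (hτ : 0 < τ) (hβ : 0 < β) :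
    (∀ lam : ℂ,
        (∃ v : Fin (n + 1) → ℂ, v ≠ 0 ∧
            ((Bmat n (1 / τ + τ / β) τ β).map (Complex.ofReal)).mulVec v = lam • v) →
        ((β / τ ^ 2 : ℝ) : ℂ) +
            ∑ l ∈ Finset.range (n + 1), (1 / (1 - (τ : ℂ) * lam)) ^ (l + 1) = 0) ∧
      (∀ μ : ℂ,
        ((β / τ ^ 2 : ℝ) : ℂ) + ∑ l ∈ Finset.range (n + 1), μ ^ (l + 1) = 0 →
        ∃ v : Fin (n + 1) → ℂ, v ≠ 0 ∧
          ((Bmat n (1 / τ + τ / β) τ β).map (Complex.ofReal)).mulVec v =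
            ((1 - 1 / μ) / (τ : ℂ)) • v) := by
  have : NeZero n := ⟨by omega⟩
  exact ⟨fun lam ⟨v, hv, heig⟩ => root_of_Bmat_eigenvector hτ.ne' hβ.ne' hv heig,
    fun μ hroot => Bmat_eigenvector_of_root hτ.ne' hβ.ne' hroot⟩
end

section
/- If α = 1/τ + τ/β and c = β/τ² > 1, then the matrix B (the time-discretization matrix of the parameterized quasi-boundary value method) has n+1 distinct eigenvalues, and hence is diagonalizable. -/
/-!
For every root `μ` of `q(μ) = c + μ + ⋯ + μ^(n+1)` the vector `v` with `v₀ = 1` and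
`vᵢ = τ (μ + ⋯ + μ^i)` is an eigenvector of `B` for the eigenvalue `(1 - 1/μ)/τ`: the rows
`i ≥ 1` reduce to a geometric sum, and the first row to `q(μ) = 0`. Since `μ ↦ (1 - 1/μ)/τ` is
injective, it remains to see that `q` has `n + 1` distinct roots. As `(μ - 1) q(μ) = r(μ) :=
μ^(n+2) + (c - 1) μ - c`, a double root `z` would also be a root of
`(n + 2) r - z r' = (n + 1)(c - 1) z - (n + 2) c`, so a positive real, where
`r'(z) = (n + 2) z^(n+1) + c - 1 > 0`. Eigenvectors for distinct eigenvalues form an invertible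
matrix, which diagonalizes `B`.
-/

open Polynomial Finset Matrix

namespace Matrix

variable {ι K : Type*} [Fintype ι] [DecidableEq ι] [Field K] {A : Matrix ι ι K} {d : ι → K}
  {v : ι → ι → K}

theorem isUnit_det_of_eigenvectors (hd : Function.Injective d) (hv : ∀ k, v k ≠ 0)
    (hAv : ∀ k, A *ᵥ v k = d k • v k) : IsUnit (Matrix.of v)ᵀ.det := by
  have hli : LinearIndependent K v :=
    Module.End.eigenvectors_linearIndependent' (toLin' A) d hd v fun k =>
      Module.End.hasEigenvector_iff.mpr ⟨Module.End.mem_eigenspace_iff.mpr (hAv k), hv k⟩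
  exact (isUnit_iff_isUnit_det _).mp (linearIndependent_cols_iff_isUnit.mp hli)

theorem eq_mul_diagonal_mul_inv_of_eigenvectors (hd : Function.Injective d)
    (hv : ∀ k, v k ≠ 0) (hAv : ∀ k, A *ᵥ v k = d k • v k) :
    A = (Matrix.of v)ᵀ * diagonal d * (Matrix.of v)ᵀ⁻¹ := by
  have hAP : A * (Matrix.of v)ᵀ = (Matrix.of v)ᵀ * diagonal d := by
    ext i k
    rw [mul_diagonal]
    simpa [mul_apply, mulVec, dotProduct, mul_comm] using congrFun (hAv k) i
  rw [← hAP, mul_nonsing_inv_cancel_right _ _ (isUnit_det_of_eigenvectors hd hv hAv)]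

end Matrix

theorem separable_X_pow_add_C_mul_X_sub_C (n : ℕ) {c : ℝ} (hc : 1 < c) :
    (X ^ (n + 2) + C ((c : ℂ) - 1) * X - C (c : ℂ)).Separable := by
  rw [separable_def, isCoprime_iff_aeval_ne_zero_of_isAlgClosed ℂ ℂ]
  intro z
  by_contra! hz
  simp only [derivative_sub, derivative_add, derivative_X_pow, derivative_C_mul_X, derivative_C,
    aeval_def, eval₂_sub, eval₂_add, eval₂_mul, eval₂_X_pow, eval₂_C, eval₂_X,
    Algebra.algebraMap_self, RingHom.id_apply, sub_zero] at hz
  obtain ⟨hroot, hderiv⟩ := hz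
  rw [show n + 2 - 1 = n + 1 by omega] at hderiv
  push_cast at hderiv
  have hz : z * (((c : ℂ) - 1) * (n + 1)) = c * (n + 2) := by
    linear_combination (n + 2 : ℂ) * hroot - z * hderiv
  have hc1 : 0 < c - 1 := sub_pos.mpr hc
  set t : ℝ := c * (n + 2) / ((c - 1) * (n + 1))
  have hzt : z = t := by
    have hden : ((c : ℂ) - 1) * (n + 1) ≠ 0 := by
      exact_mod_cast (by positivity : (c - 1) * (n + 1) ≠ 0)
    push_cast [t]
    rw [eq_div_iff hden, hz]
  have ht : 0 < t := by positivity
  have hderiv_t : ((n + 2) * t ^ (n + 1) + (c - 1) : ℝ) = 0 := by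
    rw [hzt] at hderiv
    exact_mod_cast hderiv
  exact (by positivity : 0 < ((n + 2) * t ^ (n + 1) + (c - 1) : ℝ)).ne' hderiv_t

theorem exists_injective_roots_X_mul_geom_sum_add_C (n : ℕ) {c : ℝ} (hc : 1 < c) :
    ∃ μ : Fin (n + 1) → ℂ, Function.Injective μ ∧
      ∀ k, μ k * ∑ t ∈ range (n + 1), μ k ^ t = -c := by
  set q : ℂ[X] := X * ∑ i ∈ range (n + 1), X ^ i + C (c : ℂ)
  have hfac : (X - C 1) * q = X ^ (n + 2) + C ((c : ℂ) - 1) * X - C (c : ℂ) := by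
    have hgeom := geom_sum_mul (X : ℂ[X]) (n + 1)
    simp only [q, C_1, C_sub]
    linear_combination (X : ℂ[X]) * hgeom
  have hsep : q.Separable :=
    Separable.of_mul_right (hfac ▸ separable_X_pow_add_C_mul_X_sub_C n hc)
  have hdeg : q.natDegree = n + 1 := by
    have hr : (X ^ (n + 2) + C ((c : ℂ) - 1) * X - C (c : ℂ)).natDegree = n + 2 := by
      compute_degree!
      simp
    have hq0 : q ≠ 0 := by
      rintro h
      rw [h, mul_zero] at hfac
      rw [← hfac, natDegree_zero] at hr
      omega
    rw [← hfac, natDegree_mul (X_sub_C_ne_zero 1) hq0, natDegree_X_sub_C] at hr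
    omega
  have hcard : #q.roots.toFinset = n + 1 := by
    rw [Multiset.toFinset_card_of_nodup (nodup_roots hsep), IsAlgClosed.card_roots_eq_natDegree,
      hdeg]
  set e := (Finset.equivFinOfCardEq hcard).symm
  refine ⟨fun k => e k, fun a b h => e.injective (Subtype.ext h), fun k => ?_⟩
  have hroot : q.IsRoot (e k) := isRoot_of_mem_roots (Multiset.mem_toFinset.mp (e k).2)
  simp only [q, IsRoot, eval_add, eval_mul, eval_X, eval_geom_sum, eval_C] at hroot
  linear_combination hroot

namespace Bmat

variable {n : ℕ} {α τ β : ℝ}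

theorem map_mulVec_apply_zero (hn : n ≠ 0) (v : Fin (n + 1) → ℂ) :
    ((Bmat n α τ β).map Complex.ofReal *ᵥ v) 0 = α * v 0 + v (Fin.last n) / β := by
  have h0 : (0 : Fin (n + 1)) ≠ Fin.last n := by simp [Fin.ext_iff, hn.symm]
  rw [mulVec, dotProduct, Finset.sum_eq_add 0 (Fin.last n) h0]
  · simp [Bmat, hn, div_eq_inv_mul]
  · intro j _ hj
    have hj0 : (j : ℕ) ≠ 0 := fun h => hj.1 (Fin.ext h)
    have hjn : (j : ℕ) ≠ n := fun h => hj.2 (Fin.ext h)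
    simp [Bmat, hj0, hjn]
  all_goals simp

/-- The value `w 0 = 0` stands in for the missing subdiagonal entry of the second row. -/
theorem map_mulVec_apply_of_ne_zero (w : ℕ → ℂ) (hw : w 0 = 0) {i : Fin (n + 1)}
    (hi : (i : ℕ) ≠ 0) :
    ((Bmat n α τ β).map Complex.ofReal *ᵥ fun j => if (j : ℕ) = 0 then 1 else w j) i =
      -1 + (w i - w (i - 1)) / τ := by
  have hrow : ∀ j : Fin (n + 1), (Bmat n α τ β).map Complex.ofReal i j *
      (if (j : ℕ) = 0 then 1 else w j) =
      (if j = 0 then -1 else 0) + (if j = i then w i / τ else 0) -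
        (if j = ⟨i - 1, by omega⟩ then w (i - 1) / τ else 0) := by
    intro j
    simp only [map_apply, Bmat, Fin.ext_iff, hi, if_false, Fin.val_zero]
    split_ifs <;> first | omega | (push_cast; simp_all <;> ring)
  simp only [mulVec, dotProduct, hrow, sum_sub_distrib, sum_add_distrib, sum_ite_eq', mem_univ,
    if_true]
  ring

noncomputable def eigenvector (n : ℕ) (τ : ℝ) (μ : ℂ) : Fin (n + 1) → ℂ :=
  fun j => if (j : ℕ) = 0 then 1 else τ * μ * ∑ t ∈ range j, μ ^ t

theorem eigenvector_ne_zero (τ : ℝ) (μ : ℂ) : eigenvector n τ μ ≠ 0 :=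
  fun h => by simpa [eigenvector] using congrFun h 0

theorem map_mulVec_eigenvector (hn : n ≠ 0) (hτ : τ ≠ 0) (hβ : β ≠ 0) {μ : ℂ}
    (hμ : μ * ∑ t ∈ range (n + 1), μ ^ t = -(β / τ ^ 2 : ℝ)) :
    (Bmat n (1 / τ + τ / β) τ β).map Complex.ofReal *ᵥ eigenvector n τ μ =
      ((1 - μ⁻¹) / τ) • eigenvector n τ μ := by
  have hτ' : (τ : ℂ) ≠ 0 := by exact_mod_cast hτ
  have hβ' : (β : ℂ) ≠ 0 := by exact_mod_cast hβ
  have hμ0 : μ ≠ 0 := by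
    rintro rfl
    simp [hβ, hτ] at hμ
  funext i
  by_cases hi : (i : ℕ) = 0
  · obtain rfl : i = 0 := Fin.ext hi
    rw [map_mulVec_apply_zero hn]
    rw [geom_sum_succ] at hμ
    simp only [eigenvector, Fin.val_last, hn, Fin.coe_ofNat_eq_mod, Nat.zero_mod, ↓reduceIte,
      Pi.smul_apply, smul_eq_mul, mul_one, one_div, Complex.ofReal_add, Complex.ofReal_inv,
      Complex.ofReal_div]
    push_cast at hμ
    field_simp at hμ ⊢
    linear_combination hμ
  · obtain ⟨k, hk⟩ : ∃ k, (i : ℕ) = k + 1 := Nat.exists_eq_succ_of_ne_zero hi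
    unfold eigenvector
    rw [map_mulVec_apply_of_ne_zero (fun k => τ * μ * ∑ t ∈ range k, μ ^ t) (by simp) hi]
    simp only [Pi.smul_apply, smul_eq_mul, hk, Nat.add_sub_cancel, if_neg (Nat.succ_ne_zero k)]
    have hgeom := geom_sum_mul μ (k + 1)
    rw [sum_range_succ] at hgeom ⊢
    field_simp
    linear_combination -hgeom

end Bmat

/-- If `α = 1/τ + τ/β` and `c = β/τ² > 1`, then `B` has `n+1` distinct (complex)
eigenvalues and hence is diagonalizable. -/
theorem stmt11 (n : ℕ) (hn : 1 ≤ n) (τ β : ℝ) (hτ : 0 < τ) (hβ : 0 < β)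
    (hc : 1 < β / τ ^ 2) :
    ∃ (d : Fin (n + 1) → ℂ) (P : Matrix (Fin (n + 1)) (Fin (n + 1)) ℂ),
      Function.Injective d ∧ IsUnit P.det ∧
      (∀ k, ∃ v : Fin (n + 1) → ℂ, v ≠ 0 ∧
        ((Bmat n (1 / τ + τ / β) τ β).map (Complex.ofReal)).mulVec v = d k • v) ∧
      (Bmat n (1 / τ + τ / β) τ β).map (Complex.ofReal) = P * Matrix.diagonal d * P⁻¹ := by
  obtain ⟨μ, hμ_inj, hμ⟩ := exists_injective_roots_X_mul_geom_sum_add_C n hc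
  have hd : Function.Injective fun k => (1 - (μ k)⁻¹) / (τ : ℂ) := by
    intro a b h
    apply hμ_inj
    simpa [div_left_inj' (Complex.ofReal_ne_zero.mpr hτ.ne')] using h
  have hv := fun k => Bmat.eigenvector_ne_zero (n := n) τ (μ k)
  have hAv := fun k => Bmat.map_mulVec_eigenvector (by omega) hτ.ne' hβ.ne' (hμ k)
  exact ⟨_, _, hd, isUnit_det_of_eigenvectors hd hv hAv, fun k => ⟨_, hv k, hAv k⟩,
    eq_mul_diagonal_mul_inv_of_eigenvectors hd hv hAv⟩
end

section
/- Let c > 1 and let λ be an eigenvalue of B with α = 1/τ + τ/β, c = β/τ². Then |τλ − 1| ∈ ((2c−1)^{−1/(n+1)}, 1). -/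
/-!
Write `s = 1 - τλ` (the reciprocal of the root `μ`). Row by row the eigenvector equation reads
`s v₁ = τ v₀` and `s v_{k+1} = v_k + τ v₀`, hence `s^k v_k = τ (1 + s + ⋯ + s^{k-1}) v₀`, and the first
row turns this into `c s^{n+1} + 1 + s + ⋯ + s^n = 0`; here `v₀ ≠ 0`, since `v₀ = 0` forces
`v_n = 0` and then every `v_k = 0` by running the recurrence backwards.

Multiplying by `s - 1` gives `s^{n+1} (c s - (c - 1)) = 1`. The expansion
`|c s - (c - 1)|² = (c|s| - (c - 1))² + 2c(c - 1)(|s| - Re s)` shows `|c s - (c - 1)| > 1` whenever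
`|s| ≥ 1` and `s ≠ 1`, so `|s| < 1`; then `|c s - (c - 1)| < 2c - 1` yields `|s|^{n+1} > 1/(2c - 1)`.
-/

open Finset Matrix

section ReversedRoot

variable {c : ℝ} {N : ℕ} {s : ℂ}

theorem pow_succ_mul_eq_one_of_root
    (hroot : (c : ℂ) * s ^ (N + 1) + ∑ j ∈ range (N + 1), s ^ j = 0) :
    s ^ (N + 1) * (c * s - (c - 1)) = 1 := by
  linear_combination (s - 1) * hroot - geom_sum_mul s (N + 1)

theorem sq_norm_mul_sub (c : ℝ) (s : ℂ) :
    ‖(c : ℂ) * s - (c - 1)‖ ^ 2 = (c * ‖s‖ - (c - 1)) ^ 2 + 2 * c * (c - 1) * (‖s‖ - s.re) := by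
  rw [Complex.sq_norm, Complex.normSq_apply]
  simp only [Complex.sub_re, Complex.mul_re, Complex.sub_im, Complex.mul_im, Complex.ofReal_re,
    Complex.ofReal_im, Complex.one_re, Complex.one_im]
  linear_combination (-c ^ 2) * Complex.sq_norm_sub_sq_re s

theorem one_lt_norm_mul_sub (hc : 1 < c) (hs : 1 ≤ ‖s‖) (hs1 : s ≠ 1) :
    1 < ‖(c : ℂ) * s - (c - 1)‖ := by
  by_contra! h
  have hsq := sq_norm_mul_sub c s
  have hA : ‖(c : ℂ) * s - (c - 1)‖ ^ 2 ≤ 1 := pow_le_one₀ (norm_nonneg _) h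
  have hlin : 1 ≤ c * ‖s‖ - (c - 1) := by nlinarith
  have hre : 0 ≤ 2 * c * (c - 1) * (‖s‖ - s.re) :=
    mul_nonneg (by nlinarith) (sub_nonneg.2 (Complex.re_le_norm s))
  have hnorm : ‖s‖ = 1 := by nlinarith
  have hre1 : s.re = 1 := by
    have hc' : 0 < 2 * c * (c - 1) := by nlinarith
    rw [hnorm] at hsq
    refine le_antisymm (hnorm ▸ Complex.re_le_norm s) ?_
    by_contra! hlt
    nlinarith [mul_pos hc' (sub_pos.2 hlt)]
  have him : s.im = 0 := by
    have := Complex.sq_norm_sub_sq_re s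
    rw [hnorm, hre1, sub_self, eq_comm, pow_eq_zero_iff two_ne_zero] at this
    exact this
  exact hs1 (Complex.ext hre1 him)

theorem norm_lt_one_of_root (hc : 1 < c)
    (hroot : (c : ℂ) * s ^ (N + 1) + ∑ j ∈ range (N + 1), s ^ j = 0) : ‖s‖ < 1 := by
  have hs1 : s ≠ 1 := by
    rintro rfl
    have : ((c + (N + 1) : ℝ) : ℂ) = 0 := by
      push_cast
      simpa using hroot
    rw [Complex.ofReal_eq_zero] at this
    linarith [(N.cast_nonneg : (0 : ℝ) ≤ N)]
  by_contra! hs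
  have := congrArg norm (pow_succ_mul_eq_one_of_root hroot)
  rw [norm_mul, norm_pow, norm_one] at this
  nlinarith [one_le_pow₀ (n := N + 1) hs, one_lt_norm_mul_sub hc hs hs1]

theorem inv_lt_norm_pow_of_root (hc : 1 < c)
    (hroot : (c : ℂ) * s ^ (N + 1) + ∑ j ∈ range (N + 1), s ^ j = 0) :
    (2 * c - 1)⁻¹ < ‖s‖ ^ (N + 1) := by
  have hs := norm_lt_one_of_root hc hroot
  have hA : ‖(c : ℂ) * s - (c - 1)‖ < 2 * c - 1 :=
    calc ‖(c : ℂ) * s - (c - 1)‖ ≤ ‖(c : ℂ) * s‖ + ‖((c - 1 : ℝ) : ℂ)‖ := by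
          push_cast; exact norm_sub_le _ _
      _ = c * ‖s‖ + (c - 1) := by
          rw [norm_mul, Complex.norm_real, Complex.norm_real, Real.norm_of_nonneg (by linarith),
            Real.norm_of_nonneg (by linarith)]
      _ < 2 * c - 1 := by nlinarith
  have h1 := congrArg norm (pow_succ_mul_eq_one_of_root hroot)
  rw [norm_mul, norm_pow, norm_one] at h1
  have hpow : 0 < ‖s‖ ^ (N + 1) :=
    lt_of_le_of_ne (by positivity) (left_ne_zero_of_mul_eq_one h1).symm
  rw [inv_lt_iff_one_lt_mul₀ (by linarith)]
  calc 1 = ‖s‖ ^ (N + 1) * ‖(c : ℂ) * s - (c - 1)‖ := h1.symm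
    _ < ‖s‖ ^ (N + 1) * (2 * c - 1) := mul_lt_mul_of_pos_left hA hpow

theorem rpow_neg_one_div_lt_norm_of_root (hc : 1 < c)
    (hroot : (c : ℂ) * s ^ (N + 1) + ∑ j ∈ range (N + 1), s ^ j = 0) :
    (2 * c - 1) ^ (-(1 / ((N : ℝ) + 1))) < ‖s‖ := by
  have h2c : 0 ≤ 2 * c - 1 := by linarith
  rw [Real.rpow_neg h2c, ← Real.inv_rpow h2c, one_div,
    Real.rpow_inv_lt_iff_of_pos (inv_nonneg.2 h2c) (norm_nonneg s) (by positivity)]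
  exact_mod_cast inv_lt_norm_pow_of_root hc hroot

end ReversedRoot

section Recurrence

variable {n : ℕ} {s t : ℂ} {u : ℕ → ℂ}

theorem pow_mul_eq_geom_sum_mul (h1 : s * u 1 = t * u 0)
    (hstep : ∀ k, 1 ≤ k → k + 1 ≤ n → s * u (k + 1) = u k + t * u 0) :
    ∀ k, 1 ≤ k → k ≤ n → s ^ k * u k = t * (∑ j ∈ range k, s ^ j) * u 0 := by
  intro k hk
  induction k, hk using Nat.le_induction with
  | base => simpa using fun _ => h1
  | succ k hk ih =>
    intro hkn
    calc s ^ (k + 1) * u (k + 1) = s ^ k * (s * u (k + 1)) := by ring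
      _ = s ^ k * u k + t * s ^ k * u 0 := by rw [hstep k hk hkn]; ring
      _ = t * (∑ j ∈ range (k + 1), s ^ j) * u 0 := by
        rw [ih (by omega), sum_range_succ]; ring

theorem eq_zero_of_head_eq_zero (hstep : ∀ k, 1 ≤ k → k + 1 ≤ n → s * u (k + 1) = u k + t * u 0)
    (h0 : u 0 = 0) (hn : u n = 0) {k : ℕ} (hk : k ≤ n) : u k = 0 := by
  induction hk using Nat.decreasingInduction with
  | self => exact hn
  | of_succ k hk ih =>
    rcases Nat.eq_zero_or_pos k with rfl | hk1
    · exact h0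
    · simpa [ih, h0] using (hstep k hk1 hk).symm

theorem mul_pow_add_geom_sum_eq_zero_of_recurrence {b : ℂ} (hn : 1 ≤ n) (ht : t ≠ 0)
    (h0 : (t ^ 2 + b * s) * u 0 + t * u n = 0) (h1 : s * u 1 = t * u 0)
    (hstep : ∀ k, 1 ≤ k → k + 1 ≤ n → s * u (k + 1) = u k + t * u 0)
    (hu : ∃ k ≤ n, u k ≠ 0) :
    b * s ^ (n + 1) + t ^ 2 * ∑ j ∈ range (n + 1), s ^ j = 0 := by
  have hu0 : u 0 ≠ 0 := by
    intro hu0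
    have hun : u n = 0 := by simpa [hu0, ht] using h0
    obtain ⟨k, hk, huk⟩ := hu
    exact huk (eq_zero_of_head_eq_zero hstep hu0 hun hk)
  have hgeom := pow_mul_eq_geom_sum_mul h1 hstep n hn le_rfl
  refine (mul_eq_zero.1 ?_).resolve_left hu0
  rw [sum_range_succ]
  linear_combination s ^ n * h0 - t * hgeom

end Recurrence

namespace Bmat

variable {n : ℕ} {α τ β : ℝ}

theorem row_zero (hn : n ≠ 0) :
    Bmat n α τ β 0 = Pi.single 0 α + Pi.single (Fin.last n) (1 / β) := by
  ext ⟨j, hj⟩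
  simp only [Bmat, Pi.add_apply, Pi.single_apply, Fin.ext_iff, Fin.val_zero, Fin.val_last]
  split_ifs <;> first | contradiction | omega | simp

theorem row_one (hn : 1 ≤ n) :
    Bmat n α τ β ⟨1, by omega⟩ = Pi.single 0 (-1) + Pi.single ⟨1, by omega⟩ (1 / τ) := by
  ext ⟨j, hj⟩
  simp only [Bmat, Pi.add_apply, Pi.single_apply, Fin.ext_iff, Fin.val_zero]
  split_ifs <;> first | contradiction | omega | simp

theorem row_succ_succ (k : ℕ) (hk : k + 2 ≤ n) :
    Bmat n α τ β ⟨k + 2, by omega⟩ = Pi.single 0 (-1) + Pi.single ⟨k + 2, by omega⟩ (1 / τ) +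
      Pi.single ⟨k + 1, by omega⟩ (-1 / τ) := by
  ext ⟨j, hj⟩
  simp only [Bmat, Pi.add_apply, Pi.single_apply, Fin.ext_iff, Fin.val_zero]
  split_ifs <;> first | contradiction | omega | simp

variable (v : Fin (n + 1) → ℂ)

theorem map_mulVec_apply (i : Fin (n + 1)) :
    ((Bmat n α τ β).map Complex.ofReal *ᵥ v) i = ∑ j, (Bmat n α τ β i j : ℂ) * v j := rfl

theorem map_mulVec_zero (hn : n ≠ 0) :
    ((Bmat n α τ β).map Complex.ofReal *ᵥ v) 0 = α * v 0 + 1 / β * v (Fin.last n) := by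
  simp [map_mulVec_apply, row_zero hn, Pi.single_apply, add_mul, sum_add_distrib,
    apply_ite Complex.ofReal, ite_mul]

theorem map_mulVec_one (hn : 1 ≤ n) :
    ((Bmat n α τ β).map Complex.ofReal *ᵥ v) ⟨1, by omega⟩ = -v 0 + 1 / τ * v ⟨1, by omega⟩ := by
  simp [map_mulVec_apply, row_one hn, Pi.single_apply, add_mul, sum_add_distrib,
    apply_ite Complex.ofReal, ite_mul]

theorem map_mulVec_succ_succ (k : ℕ) (hk : k + 2 ≤ n) :
    ((Bmat n α τ β).map Complex.ofReal *ᵥ v) ⟨k + 2, by omega⟩ =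
      -v 0 + 1 / τ * v ⟨k + 2, by omega⟩ - 1 / τ * v ⟨k + 1, by omega⟩ := by
  simp [map_mulVec_apply, row_succ_succ k hk, Pi.single_apply, add_mul, sum_add_distrib,
    apply_ite Complex.ofReal, ite_mul, neg_div, sub_eq_add_neg]

end Bmat

theorem Bmat.root_of_mulVec_eq_smul {n : ℕ} (hn : 1 ≤ n) {τ β : ℝ} (hτ : τ ≠ 0) (hβ : β ≠ 0)
    {lam : ℂ} {v : Fin (n + 1) → ℂ} (hv : v ≠ 0)
    (h : (Bmat n (1 / τ + τ / β) τ β).map Complex.ofReal *ᵥ v = lam • v) :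
    ((β / τ ^ 2 : ℝ) : ℂ) * (1 - τ * lam) ^ (n + 1) + ∑ j ∈ range (n + 1), (1 - τ * lam) ^ j = 0 := by
  set s := 1 - (τ : ℂ) * lam
  set u : ℕ → ℂ := fun k => if hk : k < n + 1 then v ⟨k, hk⟩ else 0
  have hu : ∀ k (hk : k < n + 1), v ⟨k, hk⟩ = u k := fun k hk => by simp only [u, dif_pos hk]
  have hu₀ : v 0 = u 0 := hu 0 n.succ_pos
  have hτ' : (τ : ℂ) ≠ 0 := Complex.ofReal_ne_zero.2 hτ
  have hβ' : (β : ℂ) ≠ 0 := Complex.ofReal_ne_zero.2 hβ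
  have h0 : ((τ : ℂ) ^ 2 + β * s) * u 0 + τ * u n = 0 := by
    have := congrFun h 0
    rw [Bmat.map_mulVec_zero v (by omega), Pi.smul_apply, smul_eq_mul, Fin.last, hu₀, hu] at this
    push_cast at this
    field_simp at this
    linear_combination this
  have h1 : s * u 1 = τ * u 0 := by
    have := congrFun h ⟨1, by omega⟩
    rw [Bmat.map_mulVec_one v hn, Pi.smul_apply, smul_eq_mul, hu₀, hu] at this
    field_simp at this
    linear_combination this
  have hstep : ∀ k, 1 ≤ k → k + 1 ≤ n → s * u (k + 1) = u k + τ * u 0 := by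
    intro k hk hkn
    obtain ⟨m, rfl⟩ : ∃ m, k = m + 1 := ⟨k - 1, by omega⟩
    have := congrFun h ⟨m + 2, by omega⟩
    rw [Bmat.map_mulVec_succ_succ v m hkn, Pi.smul_apply, smul_eq_mul, hu₀, hu, hu] at this
    field_simp at this
    linear_combination this
  have hne : ∃ k ≤ n, u k ≠ 0 := by
    obtain ⟨j, hj⟩ := Function.ne_iff.1 hv
    exact ⟨j, Nat.lt_succ_iff.1 j.isLt, fun h => hj ((hu j j.isLt).trans h)⟩
  have := mul_pow_add_geom_sum_eq_zero_of_recurrence hn hτ' h0 h1 hstep hne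
  push_cast
  field_simp
  linear_combination this

/-- For `c = β/τ² > 1` and `α = 1/τ + τ/β`, each eigenvalue `λ` of `B` satisfies
`|τλ − 1| ∈ ((2c−1)^{−1/(n+1)}, 1)`. -/
theorem stmt12 (n : ℕ) (hn : 1 ≤ n) (τ β : ℝ) (hτ : 0 < τ) (hβ : 0 < β)
    (hc : 1 < β / τ ^ 2) (lam : ℂ)
    (hlam : ∃ v : Fin (n + 1) → ℂ, v ≠ 0 ∧
      ((Bmat n (1 / τ + τ / β) τ β).map (Complex.ofReal)).mulVec v = lam • v) :
    (2 * (β / τ ^ 2) - 1) ^ (-(1 / ((n : ℝ) + 1))) < ‖(τ : ℂ) * lam - 1‖ ∧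
      ‖(τ : ℂ) * lam - 1‖ < 1 := by
  obtain ⟨v, hv, hmul⟩ := hlam
  have hroot := Bmat.root_of_mulVec_eq_smul hn hτ.ne' hβ.ne' hv hmul
  rw [norm_sub_rev]
  exact ⟨rpow_neg_one_div_lt_norm_of_root hc hroot, norm_lt_one_of_root hc hroot⟩
end

section
/- For each eigenvalue λ_l > 0 and parameters α, β, T > 0, the filter factor satisfies λ_l/(1 − e^{−λ_l T} + αβλ_l + βλ_l²) ≤ 1/(2√(γ₁β) + αβ), where γ₁ = 1 − e^{−λ₁T} and λ_l ≥ λ₁ > 0. -/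
open Real

lemma one_sub_exp_neg_mul_le_one_sub_exp_neg_mul {a b T : ℝ} (hab : a ≤ b) (hT : 0 ≤ T) :
    1 - exp (-a * T) ≤ 1 - exp (-b * T) := by
  have : -b * T ≤ -a * T := by nlinarith
  linarith [exp_le_exp.mpr this]

lemma two_mul_sqrt_mul_mul_le_add_mul_sq {a b : ℝ} (ha : 0 ≤ a) (hb : 0 ≤ b) (x : ℝ) :
    2 * √(a * b) * x ≤ a + b * x ^ 2 := by
  have h := two_mul_le_add_sq (√a) (√b * x)
  rw [sq_sqrt ha, mul_pow, sq_sqrt hb] at h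
  rw [sqrt_mul ha]
  linarith

/-- The AM-GM bound `2√(γβ) λ ≤ γ + βλ²` survives replacing `γ` by any larger `E`. -/
lemma div_add_mul_add_mul_sq_le_one_div {γ E α β x : ℝ} (hγ : 0 ≤ γ) (hγE : γ ≤ E)
    (hα : 0 < α) (hβ : 0 < β) (hx : 0 < x) :
    x / (E + α * β * x + β * x ^ 2) ≤ 1 / (2 * √(γ * β) + α * β) := by
  have hamgm := two_mul_sqrt_mul_mul_le_add_mul_sq hγ hβ.le x
  rw [div_le_div_iff₀ (by nlinarith [sq_nonneg x, mul_pos hα hβ]) (by positivity)]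
  nlinarith

/-- Filter-factor bound: for eigenvalues `λ_l ≥ λ₁ > 0`, `T, α, β > 0` and
`γ₁ = 1 − e^{−λ₁T}`, one has `λ_l/(1 − e^{−λ_l T} + αβλ_l + βλ_l²) ≤ 1/(2√(γ₁β) + αβ)`. -/
theorem stmt14 (T lam lam1 α β : ℝ) (hlam1 : 0 < lam1) (hlam : lam1 ≤ lam)
    (hT : 0 < T) (hα : 0 < α) (hβ : 0 < β) :
    lam / (1 - Real.exp (-lam * T) + α * β * lam + β * lam ^ 2) ≤
      1 / (2 * Real.sqrt ((1 - Real.exp (-lam1 * T)) * β) + α * β) := by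
  have hγ : 0 ≤ 1 - exp (-lam1 * T) := by
    simpa using one_sub_exp_neg_mul_le_one_sub_exp_neg_mul hlam1.le hT.le
  exact div_add_mul_add_mul_sq_le_one_div hγ
    (one_sub_exp_neg_mul_le_one_sub_exp_neg_mul hlam hT.le) hα hβ (hlam1.trans_le hlam)
end
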